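/- arXiv:1801.00107 — 5 statements merged into one kernel-verified Lean document; each statement's English description precedes it below -/
import Mathlib

section
/- Let A and B be positive bounded operators on a complex Hilbert space H, and let S be a positive operator such that S[x] = sup_{n∈ℕ} inf_{y∈H} (B[x−y] + n·A[y]) for all x ∈ H (i.e. S = [A]B). Then S ≤ B, S is A-absolutely continuous, the operators B − S and A are singular, and S is the greatest element of the set of positive operators C with C ≤ B and C A-absolutely continuous. -/
open scoped ComplexOrder

/-- `A` is a positive operator: `⟪A x, x⟫ ≥ 0` for all `x`. -/
def IsPosOp {H : Type*} [NormedAddCommGroup H] [InnerProductSpace ℂ H]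
    (A : H →L[ℂ] H) : Prop :=
  ∀ x : H, 0 ≤ (inner ℂ (A x) x : ℂ)

/-- The Loewner order: `A ≤ B` iff `B - A` is positive. -/
def OpLe {H : Type*} [NormedAddCommGroup H] [InnerProductSpace ℂ H]
    (A B : H →L[ℂ] H) : Prop :=
  IsPosOp (B - A)

/-- The quadratic form of an operator: `A[x] = re ⟪A x, x⟫`. -/
noncomputable def QF {H : Type*} [NormedAddCommGroup H] [InnerProductSpace ℂ H]
    (A : H →L[ℂ] H) (x : H) : ℝ :=
  (inner ℂ (A x) x : ℂ).re

/-- `A` and `B` are singular: the only positive operator below both is `0`. -/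
def SingOp {H : Type*} [NormedAddCommGroup H] [InnerProductSpace ℂ H]
    (A B : H →L[ℂ] H) : Prop :=
  ∀ C : H →L[ℂ] H, IsPosOp C → OpLe C A → OpLe C B → C = 0

/-- `B` is `A`-absolutely continuous: `B` is the strong limit of a monotone increasing
sequence of positive operators, each dominated by a nonnegative multiple of `A`. -/
def AbsCont {H : Type*} [NormedAddCommGroup H] [InnerProductSpace ℂ H]
    (B A : H →L[ℂ] H) : Prop :=
  ∃ Bn : ℕ → H →L[ℂ] H,
    (∀ n, IsPosOp (Bn n)) ∧
    (∀ m n, m ≤ n → OpLe (Bn m) (Bn n)) ∧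
    (∀ n, ∃ c : ℝ, 0 ≤ c ∧ OpLe (Bn n) (c • A)) ∧
    (∀ x : H, Filter.Tendsto (fun n => Bn n x) Filter.atTop (nhds (B x)))

/-- `S = [A]B`: the quadratic form of `S` is `sup_n inf_y (B[x-y] + n·A[y])`. -/
def IsShort {H : Type*} [NormedAddCommGroup H] [InnerProductSpace ℂ H]
    (A B S : H →L[ℂ] H) : Prop :=
  ∀ x : H, QF S x = ⨆ n : ℕ, ⨅ y : H, (QF B (x - y) + (n : ℝ) * QF A y)

/-!
The infimum `inf_y (B[x - y] + n A[y])` is the form of the parallel sum `B : nA`. When `B + C` is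
invertible, completing the square shows that `B - B (B + C)⁻¹ B` is the parallel sum `B : C`; in
general `B : C` is the strong limit of the decreasing sequence `B : (C + ε)` as `ε → 0`.

The operators `B : nA` increase with `n`, lie below `B` and below `nA`, and their forms increase to
`S[x]`; since `‖(S - T) x‖² ≤ ‖S‖ (S - T)[x]` for `0 ≤ T ≤ S`, they converge strongly to `S`, so
`S ≤ B` and `S` is `A`-absolutely continuous. If `0 ≤ C ≤ B` and `C ≤ cA`, the inequality
`m C[x] ≤ (m + 1) (C[x - y] + m C[y])` puts `m/(m+1) C` below `B : nA` for `n ≥ cm`, so `C ≤ S`;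
strong limits extend this to every `A`-absolutely continuous `C ≤ B`. Finally, if `C ≤ B - S` and
`C ≤ A`, then `S + C` is again `A`-absolutely continuous and below `B`, so `S + C ≤ S` and `C = 0`.
-/

open Filter Topology

section QuadraticForm
variable {H : Type*} [NormedAddCommGroup H] [InnerProductSpace ℂ H]

lemma qf_sub (C D : H →L[ℂ] H) (x : H) : QF (C - D) x = QF C x - QF D x := by
  simp [QF]

lemma qf_add (C D : H →L[ℂ] H) (x : H) : QF (C + D) x = QF C x + QF D x := by
  simp [QF]

lemma qf_real_smul (c : ℝ) (T : H →L[ℂ] H) (x : H) : QF (c • T) x = c * QF T x := by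
  simp [QF, ← Complex.coe_smul, mul_comm]

lemma qf_one (x : H) : QF 1 x = ‖x‖ ^ 2 := by
  rw [QF, one_apply_eq_self]
  exact inner_self_eq_norm_sq (𝕜 := ℂ) x

lemma qf_sub_apply {T : H →L[ℂ] H} (hT : (T : H →ₗ[ℂ] H).IsSymmetric) (x y : H) :
    QF T (x - y) = QF T x - 2 * (inner ℂ (T x) y).re + QF T y := by
  have h : (inner ℂ (T y) x).re = (inner ℂ (T x) y).re := by
    rw [← ContinuousLinearMap.coe_coe, hT y x, ← inner_conj_symm, Complex.conj_re]
  simp only [QF, map_sub, inner_sub_left, inner_sub_right, Complex.sub_re]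
  linarith

lemma tendsto_qf {T : ℕ → H →L[ℂ] H} {L : H →L[ℂ] H} {x : H}
    (h : Tendsto (fun n => T n x) atTop (𝓝 (L x))) :
    Tendsto (fun n => QF (T n) x) atTop (𝓝 (QF L x)) :=
  (Complex.continuous_re.tendsto _).comp (h.inner tendsto_const_nhds)

lemma isPosOp_iff_nonneg (T : H →L[ℂ] H) : IsPosOp T ↔ 0 ≤ T := by
  rw [ContinuousLinearMap.nonneg_iff_isPositive, ContinuousLinearMap.isPositive_iff_complex]
  refine forall_congr' fun x => ?_
  rw [Complex.nonneg_iff, Complex.ext_iff]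
  simp only [Complex.ofReal_re, Complex.ofReal_im, RCLike.re_to_complex]
  tauto

lemma qf_nonneg {T : H →L[ℂ] H} (hT : 0 ≤ T) (x : H) : 0 ≤ QF T x :=
  ((ContinuousLinearMap.nonneg_iff_isPositive T).mp hT).re_inner_nonneg_left x

end QuadraticForm

section PositiveOperator
variable {H : Type*} [NormedAddCommGroup H] [InnerProductSpace ℂ H] [CompleteSpace H]

lemma opLe_iff_le (C D : H →L[ℂ] H) : OpLe C D ↔ C ≤ D := by
  rw [OpLe, isPosOp_iff_nonneg, sub_nonneg]

lemma qf_le_qf {C D : H →L[ℂ] H} (h : C ≤ D) (x : H) : QF C x ≤ QF D x := by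
  have := qf_nonneg (sub_nonneg.mpr h) x
  rwa [qf_sub, sub_nonneg] at this

lemma le_of_qf_le {C D : H →L[ℂ] H} (hC : IsSelfAdjoint C) (hD : IsSelfAdjoint D)
    (h : ∀ x, QF C x ≤ QF D x) : C ≤ D := by
  rw [ContinuousLinearMap.le_def, ContinuousLinearMap.isPositive_def']
  refine ⟨hD.sub hC, fun x => ?_⟩
  have := h x
  rw [← sub_nonneg, ← qf_sub] at this
  exact this

end PositiveOperator

section SquareRoot
variable {H : Type*} [NormedAddCommGroup H] [InnerProductSpace ℂ H] [CompleteSpace H]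

lemma qf_eq_norm_sqrt_sq {T : H →L[ℂ] H} (hT : 0 ≤ T) (x : H) :
    QF T x = ‖CFC.sqrt T x‖ ^ 2 := by
  set R := CFC.sqrt T
  have hR : IsSelfAdjoint R := IsSelfAdjoint.of_nonneg (CFC.sqrt_nonneg T)
  have hsymm : inner ℂ (R (R x)) x = inner ℂ (R x) (R x) := hR.isSymmetric _ _
  rw [QF, ← CFC.sqrt_mul_sqrt_self T hT]
  change (inner ℂ (R (R x)) x).re = _
  rw [hsymm]
  exact inner_self_eq_norm_sq (𝕜 := ℂ) _

lemma norm_apply_sq_le {T : H →L[ℂ] H} (hT : 0 ≤ T) (x : H) : ‖T x‖ ^ 2 ≤ ‖T‖ * QF T x := by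
  set R := CFC.sqrt T
  have hR : IsSelfAdjoint R := IsSelfAdjoint.of_nonneg (CFC.sqrt_nonneg T)
  have hRR : R * R = T := CFC.sqrt_mul_sqrt_self T hT
  have hnorm : ‖T‖ = ‖R‖ ^ 2 := by
    rw [← hRR]
    nth_rewrite 1 [← hR.star_eq]
    rw [CStarRing.norm_star_mul_self, sq]
  have happly : ‖T x‖ ≤ ‖R‖ * ‖R x‖ := by
    rw [← hRR]
    exact R.le_opNorm (R x)
  rw [hnorm, qf_eq_norm_sqrt_sq hT, ← mul_pow]
  exact pow_le_pow_left₀ (norm_nonneg _) happly 2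

lemma norm_sub_apply_sq_le {C D : H →L[ℂ] H} (hC : 0 ≤ C) (hCD : C ≤ D) (x : H) :
    ‖D x - C x‖ ^ 2 ≤ ‖D‖ * (QF D x - QF C x) := by
  have hDC : 0 ≤ D - C := sub_nonneg.mpr hCD
  have hnorm : ‖D - C‖ ≤ ‖D‖ :=
    CStarAlgebra.norm_le_norm_of_nonneg_of_le hDC (sub_le_self D hC)
  calc ‖D x - C x‖ ^ 2 ≤ ‖D - C‖ * QF (D - C) x := norm_apply_sq_le hDC x
    _ ≤ ‖D‖ * (QF D x - QF C x) := by
      rw [← qf_sub]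
      exact mul_le_mul_of_nonneg_right hnorm (qf_nonneg hDC x)

lemma mul_qf_le_qf_sub_add {T : H →L[ℂ] H} (hT : 0 ≤ T) {m : ℝ} (hm : 0 ≤ m) (x y : H) :
    m * QF T x ≤ (m + 1) * (QF T (x - y) + m * QF T y) := by
  set R := CFC.sqrt T
  have htri : ‖R x‖ ≤ ‖R (x - y)‖ + ‖R y‖ := by
    simpa using norm_add_le (R (x - y)) (R y)
  rw [qf_eq_norm_sqrt_sq hT, qf_eq_norm_sqrt_sq hT, qf_eq_norm_sqrt_sq hT]
  have hsq := pow_le_pow_left₀ (norm_nonneg _) htri 2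
  nlinarith [sq_nonneg (‖R (x - y)‖ - m * ‖R y‖)]

end SquareRoot

lemma cauchySeq_of_dist_sq_le {E F : Type*} [PseudoMetricSpace E] [PseudoMetricSpace F]
    {s : ℕ → E} {a : ℕ → F} (ha : CauchySeq a) (C : ℝ)
    (h : ∀ m n, dist (s m) (s n) ^ 2 ≤ C * dist (a m) (a n)) : CauchySeq s := by
  rw [cauchySeq_iff_tendsto_dist_atTop_0] at ha ⊢
  refine squeeze_zero (fun _ => dist_nonneg)
    (fun p => Real.le_sqrt_of_sq_le (h p.1 p.2)) ?_
  simpa using (ha.const_mul C).sqrt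

section MonotoneConvergence
variable {H : Type*} [NormedAddCommGroup H] [InnerProductSpace ℂ H] [CompleteSpace H]

lemma dist_apply_sq_le_of_antitone {T : ℕ → H →L[ℂ] H} (hT : ∀ k, 0 ≤ T k)
    (hanti : Antitone T) (x : H) (m n : ℕ) :
    dist (T m x) (T n x) ^ 2 ≤ ‖T 0‖ * dist (QF (T m) x) (QF (T n) x) := by
  wlog hmn : m ≤ n generalizing m n
  · rw [dist_comm, dist_comm (QF (T m) x)]
    exact this n m (le_of_not_ge hmn)
  have hnorm : ‖T m‖ ≤ ‖T 0‖ :=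
    CStarAlgebra.norm_le_norm_of_nonneg_of_le (hT m) (hanti (Nat.zero_le m))
  calc dist (T m x) (T n x) ^ 2 ≤ ‖T m‖ * (QF (T m) x - QF (T n) x) := by
        rw [dist_eq_norm]
        exact norm_sub_apply_sq_le (hT n) (hanti hmn) x
    _ ≤ ‖T 0‖ * dist (QF (T m) x) (QF (T n) x) :=
        mul_le_mul hnorm (le_abs_self _) (sub_nonneg.mpr (qf_le_qf (hanti hmn) x))
          (norm_nonneg _)

lemma exists_tendsto_apply_of_antitone {T : ℕ → H →L[ℂ] H} (hT : ∀ k, 0 ≤ T k)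
    (hanti : Antitone T) :
    ∃ L : H →L[ℂ] H, 0 ≤ L ∧ ∀ x, Tendsto (fun k => T k x) atTop (𝓝 (L x)) := by
  have hconv : ∀ x, ∃ z, Tendsto (fun k => T k x) atTop (𝓝 z) := fun x =>
    have hqf : CauchySeq fun k => QF (T k) x :=
      (tendsto_atTop_ciInf (fun _ _ h => qf_le_qf (hanti h) x)
        ⟨0, by rintro _ ⟨k, rfl⟩; exact qf_nonneg (hT k) x⟩).cauchySeq
    cauchySeq_tendsto_of_complete
      (cauchySeq_of_dist_sq_le hqf _ (dist_apply_sq_le_of_antitone hT hanti x))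
  choose f hf using hconv
  let L : H →L[ℂ] H := continuousLinearMapOfTendsto T (tendsto_pi_nhds.mpr hf)
  have hL : ∀ x, Tendsto (fun k => T k x) atTop (𝓝 (L x)) := hf
  refine ⟨L, (ContinuousLinearMap.nonneg_iff_isPositive L).mpr ⟨fun x y => ?_, fun x => ?_⟩, hL⟩
  · have hsymm : ∀ k, inner ℂ (T k x) y = inner ℂ x (T k y) := fun k =>
      ((ContinuousLinearMap.nonneg_iff_isPositive _).mp (hT k)).isSymmetric x y
    refine tendsto_nhds_unique ((hL x).inner tendsto_const_nhds) ?_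
    simpa only [hsymm, ContinuousLinearMap.coe_coe] using tendsto_const_nhds.inner (hL y)
  · exact ge_of_tendsto' (tendsto_qf (hL x)) fun k => qf_nonneg (hT k) x

end MonotoneConvergence

lemma le_isGLB_range {ι α : Type*} [Preorder α] {f g : ι → α} {z a : α}
    (hz : z ∈ lowerBounds (Set.range f)) (ha : IsGLB (Set.range g) a) (h : ∀ i, f i ≤ g i) :
    z ≤ a :=
  ha.2 (Set.forall_mem_range.2 fun i => (hz ⟨i, rfl⟩).trans (h i))

section ParallelSum
variable {H : Type*} [NormedAddCommGroup H] [InnerProductSpace ℂ H]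

/-- `T` is the parallel sum `B : C`; phrased with `IsGLB` rather than `⨅` so that it carries no
junk value. -/
def IsParallelSum (B C T : H →L[ℂ] H) : Prop :=
  ∀ x, IsGLB (Set.range fun y => QF B (x - y) + QF C y) (QF T x)

lemma qf_sub_add_qf_eq {B C : H →L[ℂ] H} (hB : (B : H →ₗ[ℂ] H).IsSymmetric)
    (hC : (C : H →ₗ[ℂ] H).IsSymmetric) {x w : H} (hw : (B + C) w = B x) (y : H) :
    QF B (x - y) + QF C y = QF B x - (inner ℂ (B x) w).re + QF (B + C) (y - w) := by
  have hD : ((B + C : H →L[ℂ] H) : H →ₗ[ℂ] H).IsSymmetric := by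
    simpa using hB.add hC
  have hcross : (inner ℂ ((B + C) y) w).re = (inner ℂ (B x) y).re := by
    rw [← ContinuousLinearMap.coe_coe, hD y w, ← inner_conj_symm, Complex.conj_re,
      ContinuousLinearMap.coe_coe, hw]
  have hw' : QF (B + C) w = (inner ℂ (B x) w).re := by rw [QF, hw]
  rw [qf_sub_apply hB, qf_sub_apply hD, hcross, hw', qf_add]
  ring

lemma IsParallelSum.qf_le_qf {B C C' T T' : H →L[ℂ] H} (hT : IsParallelSum B C T)
    (hT' : IsParallelSum B C' T') (h : ∀ y, QF C y ≤ QF C' y) (x : H) : QF T x ≤ QF T' x :=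
  le_isGLB_range (hT x).1 (hT' x) fun y => (add_le_add_iff_left _).2 (h y)

lemma IsParallelSum.qf_le_left {B C T : H →L[ℂ] H} (hT : IsParallelSum B C T) (x : H) :
    QF T x ≤ QF B x := by
  simpa [QF] using (hT x).1 ⟨0, rfl⟩

lemma IsParallelSum.qf_le_right {B C T : H →L[ℂ] H} (hT : IsParallelSum B C T) (x : H) :
    QF T x ≤ QF C x := by
  simpa [QF] using (hT x).1 ⟨x, rfl⟩

lemma IsShort.qf_eq_iSup {A B S : H →L[ℂ] H} {T : ℕ → H →L[ℂ] H} (hshort : IsShort A B S)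
    (hT : ∀ n : ℕ, IsParallelSum B ((n : ℝ) • A) (T n)) (x : H) :
    QF S x = ⨆ n, QF (T n) x := by
  rw [hshort x]
  congr 1 with n
  simpa only [qf_real_smul] using (hT n x).ciInf_eq

variable [CompleteSpace H]

lemma exists_isLeast_of_isUnit {B C : H →L[ℂ] H} (hB : 0 ≤ B) (hC : 0 ≤ C)
    (hD : IsUnit (B + C)) :
    ∃ T : H →L[ℂ] H, 0 ≤ T ∧
      ∀ x, IsLeast (Set.range fun y => QF B (x - y) + QF C y) (QF T x) := by
  have hBs := ((ContinuousLinearMap.nonneg_iff_isPositive B).mp hB).isSymmetric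
  have hCs := ((ContinuousLinearMap.nonneg_iff_isPositive C).mp hC).isSymmetric
  set E := Ring.inverse (B + C)
  have hE : IsSelfAdjoint E := (IsSelfAdjoint.of_nonneg (add_nonneg hB hC)).ringInverse
  have hDE : ∀ z, (B + C) (E z) = z := fun z =>
    congrArg (· z) (Ring.mul_inverse_cancel _ hD)
  set T := B - B * E * B
  have hT : ∀ x, QF T x = QF B x - (inner ℂ (B x) (E (B x))).re := fun x => by
    have hsymm : inner ℂ (B (E (B x))) x = inner ℂ (E (B x)) (B x) := hBs _ _
    rw [qf_sub, sub_right_inj]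
    change (inner ℂ (B (E (B x))) x).re = _
    rw [hsymm, ← inner_conj_symm, Complex.conj_re]
  have hleast : ∀ x, IsLeast (Set.range fun y => QF B (x - y) + QF C y) (QF T x) := by
    intro x
    have hsq := qf_sub_add_qf_eq hBs hCs (hDE (B x))
    refine ⟨⟨E (B x), ?_⟩, ?_⟩
    · change QF B (x - E (B x)) + QF C (E (B x)) = QF T x
      rw [hsq, hT, sub_self]
      simp [QF]
    · rintro _ ⟨y, rfl⟩
      change QF T x ≤ QF B (x - y) + QF C y
      rw [hsq, hT]
      linarith [qf_nonneg (add_nonneg hB hC) (y - E (B x))]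
  have hBsa := IsSelfAdjoint.of_nonneg hB
  refine ⟨T, le_of_qf_le (.zero _) (hBsa.sub (hE.conjugate_self hBsa)) fun x => ?_, hleast⟩
  obtain ⟨⟨y, hy⟩, -⟩ := hleast x
  rw [← hy]
  simpa [QF] using add_nonneg (qf_nonneg hB (x - y)) (qf_nonneg hC y)

end ParallelSum

section ParallelSumExistence
variable {H : Type*} [NormedAddCommGroup H] [InnerProductSpace ℂ H] [CompleteSpace H]

lemma isUnit_add_smul_one {D : H →L[ℂ] H} (hD : 0 ≤ D) {ε : ℝ} (hε : 0 < ε) :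
    IsUnit (D + ε • 1) := by
  refine ContinuousLinearMap.isUnit_of_forall_le_norm_inner_map _ (c := ⟨ε, hε.le⟩) hε fun x => ?_
  calc ‖x‖ ^ 2 * ε ≤ QF (D + ε • 1) x := by
        rw [qf_add, qf_real_smul, qf_one]
        nlinarith [qf_nonneg hD x]
    _ ≤ ‖inner ℂ ((D + ε • 1) x) x‖ := Complex.re_le_norm _

lemma exists_isParallelSum {B C : H →L[ℂ] H} (hB : 0 ≤ B) (hC : 0 ≤ C) :
    ∃ T : H →L[ℂ] H, 0 ≤ T ∧ IsParallelSum B C T := by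
  set ε : ℕ → ℝ := fun k => 1 / ((k : ℝ) + 1)
  have hε : ∀ k, 0 < ε k := fun k => by positivity
  have hCε : ∀ k y, QF (C + ε k • 1) y = QF C y + ε k * ‖y‖ ^ 2 := fun k y => by
    rw [qf_add, qf_real_smul, qf_one]
  have hreg : ∀ k, ∃ T : H →L[ℂ] H, 0 ≤ T ∧ IsParallelSum B (C + ε k • 1) T := fun k => by
    have hunit : IsUnit (B + (C + ε k • 1)) := by
      rw [← add_assoc]
      exact isUnit_add_smul_one (add_nonneg hB hC) (hε k)
    obtain ⟨T, hT0, hT⟩ := exists_isLeast_of_isUnit hB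
      (add_nonneg hC (smul_nonneg (hε k).le zero_le_one)) hunit
    exact ⟨T, hT0, fun x => (hT x).isGLB⟩
  choose T hT0 hT using hreg
  have hanti : Antitone T := fun k l hkl =>
    le_of_qf_le (IsSelfAdjoint.of_nonneg (hT0 l)) (IsSelfAdjoint.of_nonneg (hT0 k))
      ((hT l).qf_le_qf (hT k) fun y => by
        rw [hCε, hCε]
        gcongr
        exact Nat.one_div_le_one_div hkl)
  obtain ⟨L, hL0, hL⟩ := exists_tendsto_apply_of_antitone hT0 hanti
  refine ⟨L, hL0, fun x => ⟨?_, fun z hz => ?_⟩⟩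
  · rintro _ ⟨y, rfl⟩
    have hlim : Tendsto (fun k => QF B (x - y) + QF (C + ε k • 1) y) atTop
        (𝓝 (QF B (x - y) + QF C y)) := by
      simp only [hCε]
      simpa [ε] using tendsto_one_div_add_atTop_nhds_zero_nat.mul_const (‖y‖ ^ 2)
        |>.const_add (QF C y) |>.const_add (QF B (x - y))
    exact le_of_tendsto_of_tendsto' (tendsto_qf (hL x)) hlim fun k => (hT k x).1 ⟨y, rfl⟩
  · refine ge_of_tendsto' (tendsto_qf (hL x)) fun k => le_isGLB_range hz (hT k x) fun y => ?_
    rw [hCε]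
    linarith [mul_nonneg (hε k).le (sq_nonneg ‖y‖)]

end ParallelSumExistence

section StrongLimits
variable {H : Type*} [NormedAddCommGroup H] [InnerProductSpace ℂ H] [CompleteSpace H]

lemma tendsto_apply_of_tendsto_qf {T : ℕ → H →L[ℂ] H} {S : H →L[ℂ] H} (hT : ∀ n, 0 ≤ T n)
    (hTS : ∀ n, T n ≤ S) {x : H} (h : Tendsto (fun n => QF (T n) x) atTop (𝓝 (QF S x))) :
    Tendsto (fun n => T n x) atTop (𝓝 (S x)) := by
  rw [tendsto_iff_norm_sub_tendsto_zero]
  refine squeeze_zero (g := fun n => √(‖S‖ * (QF S x - QF (T n) x))) (fun _ => norm_nonneg _)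
    (fun n => Real.le_sqrt_of_sq_le ?_) ?_
  · rw [norm_sub_rev]
    exact norm_sub_apply_sq_le (hT n) (hTS n) x
  · simpa using ((h.const_sub (QF S x)).const_mul ‖S‖).sqrt

lemma le_of_tendsto_apply {T : ℕ → H →L[ℂ] H} {C D : H →L[ℂ] H} (hC : IsSelfAdjoint C)
    (hD : IsSelfAdjoint D) (h : ∀ x, Tendsto (fun n => T n x) atTop (𝓝 (C x)))
    (hle : ∀ n, T n ≤ D) : C ≤ D :=
  le_of_qf_le hC hD fun x => le_of_tendsto' (tendsto_qf (h x)) fun n => qf_le_qf (hle n) x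

lemma Monotone.le_of_tendsto_apply {T : ℕ → H →L[ℂ] H} {C : H →L[ℂ] H}
    (hT : ∀ n, IsSelfAdjoint (T n)) (hmono : Monotone T) (hC : IsSelfAdjoint C)
    (h : ∀ x, Tendsto (fun n => T n x) atTop (𝓝 (C x))) (n : ℕ) : T n ≤ C :=
  le_of_qf_le (hT n) hC fun x =>
    (Monotone.ge_of_tendsto (fun _ _ hkl => qf_le_qf (hmono hkl) x) (tendsto_qf (h x))) n

end StrongLimits

section AbsolutelyContinuous
variable {H : Type*} [NormedAddCommGroup H] [InnerProductSpace ℂ H] [CompleteSpace H]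

lemma absCont_iff {B A : H →L[ℂ] H} :
    AbsCont B A ↔ ∃ Bn : ℕ → H →L[ℂ] H, (∀ n, 0 ≤ Bn n) ∧ Monotone Bn ∧
      (∀ n, ∃ c : ℝ, 0 ≤ c ∧ Bn n ≤ c • A) ∧ ∀ x, Tendsto (fun n => Bn n x) atTop (𝓝 (B x)) := by
  simp only [AbsCont, isPosOp_iff_nonneg, opLe_iff_le, Monotone]

lemma singOp_iff {A B : H →L[ℂ] H} : SingOp A B ↔ ∀ C, 0 ≤ C → C ≤ A → C ≤ B → C = 0 := by
  simp only [SingOp, isPosOp_iff_nonneg, opLe_iff_le]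

lemma AbsCont.add {S C A : H →L[ℂ] H} (hS : AbsCont S A) (hC : 0 ≤ C) (hCA : C ≤ A) :
    AbsCont (S + C) A := by
  obtain ⟨Sn, hSn0, hmono, hdom, hlim⟩ := absCont_iff.mp hS
  refine absCont_iff.mpr ⟨fun n => Sn n + C, fun n => add_nonneg (hSn0 n) hC,
    fun m n hmn => add_le_add_left (hmono hmn) C, fun n => ?_,
    fun x => by simpa using (hlim x).add_const (C x)⟩
  obtain ⟨c, hc, hSnA⟩ := hdom n
  exact ⟨c + 1, by positivity, by simpa [add_smul] using add_le_add hSnA hCA⟩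

lemma AbsCont.le_of_forall_le {C A D : H →L[ℂ] H} (hCA : AbsCont C A) (hC : IsSelfAdjoint C)
    (hD : IsSelfAdjoint D)
    (h : ∀ C', 0 ≤ C' → C' ≤ C → ∀ c : ℝ, C' ≤ c • A → C' ≤ D) : C ≤ D := by
  obtain ⟨Cn, hCn0, hmono, hdom, hlim⟩ := absCont_iff.mp hCA
  refine le_of_tendsto_apply hC hD hlim fun n => ?_
  obtain ⟨c, -, hCnA⟩ := hdom n
  exact h _ (hCn0 n) (hmono.le_of_tendsto_apply (fun k => .of_nonneg (hCn0 k)) hC hlim n) c hCnA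

lemma singOp_sub_of_isGreatest {A B S : H →L[ℂ] H} (hS0 : 0 ≤ S) (hS : AbsCont S A)
    (hmax : ∀ C, 0 ≤ C → C ≤ B → AbsCont C A → C ≤ S) : SingOp (B - S) A := by
  refine singOp_iff.mpr fun C hC hCBS hCA => le_antisymm ?_ hC
  have hSC : S + C ≤ S := hmax _ (add_nonneg hS0 hC) (by rwa [le_sub_iff_add_le'] at hCBS)
    (hS.add hC hCA)
  simpa using hSC

end AbsolutelyContinuous

section Short
variable {H : Type*} [NormedAddCommGroup H] [InnerProductSpace ℂ H] [CompleteSpace H]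
  {A B S : H →L[ℂ] H} {T : ℕ → H →L[ℂ] H}

lemma monotone_parallelSum_smul (hA : 0 ≤ A) (hT0 : ∀ n, 0 ≤ T n)
    (hT : ∀ n : ℕ, IsParallelSum B ((n : ℝ) • A) (T n)) : Monotone T := fun m n hmn =>
  le_of_qf_le (.of_nonneg (hT0 m)) (.of_nonneg (hT0 n)) ((hT m).qf_le_qf (hT n) fun y => by
    rw [qf_real_smul, qf_real_smul]
    exact mul_le_mul_of_nonneg_right (Nat.cast_le.mpr hmn) (qf_nonneg hA y))

lemma IsShort.tendsto_qf (hshort : IsShort A B S) (hA : 0 ≤ A) (hT0 : ∀ n, 0 ≤ T n)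
    (hT : ∀ n : ℕ, IsParallelSum B ((n : ℝ) • A) (T n)) (x : H) :
    Tendsto (fun n => QF (T n) x) atTop (𝓝 (QF S x)) := by
  rw [hshort.qf_eq_iSup hT]
  exact tendsto_atTop_ciSup (fun m n hmn => qf_le_qf (monotone_parallelSum_smul hA hT0 hT hmn) x)
    ⟨QF B x, Set.forall_mem_range.2 fun n => (hT n).qf_le_left x⟩

variable (hshort : IsShort A B S) (hA : 0 ≤ A) (hT0 : ∀ n, 0 ≤ T n)
  (hT : ∀ n : ℕ, IsParallelSum B ((n : ℝ) • A) (T n)) (hS : IsSelfAdjoint S)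
include hshort hA hT0 hT hS

lemma IsShort.le (hB : IsSelfAdjoint B) : S ≤ B :=
  le_of_qf_le hS hB fun x =>
    le_of_tendsto' (hshort.tendsto_qf hA hT0 hT x) fun n => (hT n).qf_le_left x

lemma IsShort.parallelSum_le (n : ℕ) : T n ≤ S :=
  le_of_qf_le (.of_nonneg (hT0 n)) hS fun x =>
    Monotone.ge_of_tendsto (fun _ _ hmn => qf_le_qf (monotone_parallelSum_smul hA hT0 hT hmn) x)
      (hshort.tendsto_qf hA hT0 hT x) n

lemma IsShort.absCont : AbsCont S A := by
  refine absCont_iff.mpr ⟨T, hT0, monotone_parallelSum_smul hA hT0 hT, fun n => ⟨n, n.cast_nonneg,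
    le_of_qf_le (.of_nonneg (hT0 n)) (.of_nonneg (smul_nonneg n.cast_nonneg hA))
      (hT n).qf_le_right⟩, fun x => ?_⟩
  exact tendsto_apply_of_tendsto_qf hT0 (hshort.parallelSum_le hA hT0 hT hS)
    (hshort.tendsto_qf hA hT0 hT x)

lemma IsShort.le_of_le_smul {C : H →L[ℂ] H} (hC : 0 ≤ C) (hCB : C ≤ B) {c : ℝ}
    (hCA : C ≤ c • A) : C ≤ S := by
  refine le_of_qf_le (.of_nonneg hC) hS fun x => ?_
  have key : ∀ m : ℕ, (m : ℝ) / (m + 1) * QF C x ≤ QF S x := by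
    intro m
    set n := ⌈c * m⌉₊
    refine le_trans ?_ (qf_le_qf (hshort.parallelSum_le hA hT0 hT hS n) x)
    refine (hT n x).2 (Set.forall_mem_range.2 fun y => ?_)
    have hCy : m * QF C y ≤ n * QF A y :=
      calc m * QF C y ≤ m * (c * QF A y) := by
            gcongr
            simpa only [qf_real_smul] using qf_le_qf hCA y
        _ = (c * m) * QF A y := by ring
        _ ≤ n * QF A y := mul_le_mul_of_nonneg_right (Nat.le_ceil _) (qf_nonneg hA y)
    rw [qf_real_smul, div_mul_eq_mul_div, div_le_iff₀ (by positivity)]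
    calc m * QF C x ≤ (m + 1) * (QF C (x - y) + m * QF C y) :=
          mul_qf_le_qf_sub_add hC m.cast_nonneg x y
      _ ≤ (m + 1) * (QF B (x - y) + n * QF A y) := by
          gcongr
          exact qf_le_qf hCB _
      _ = (QF B (x - y) + n * QF A y) * (m + 1) := mul_comm _ _
  have hlim : Tendsto (fun m : ℕ => (m : ℝ) / (m + 1) * QF C x) atTop (𝓝 (QF C x)) := by
    simpa using (tendsto_natCast_div_add_atTop (1 : ℝ)).mul_const (QF C x)
  exact le_of_tendsto' hlim key

end Short

theorem generalized_short_is_lebesgue_decomposition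
    {H : Type*} [NormedAddCommGroup H] [InnerProductSpace ℂ H] [CompleteSpace H]
    (A B S : H →L[ℂ] H) (hA : IsPosOp A) (hB : IsPosOp B) (hS : IsPosOp S)
    (hshort : IsShort A B S) :
    OpLe S B ∧ AbsCont S A ∧ SingOp (B - S) A ∧
      ∀ C : H →L[ℂ] H, IsPosOp C → OpLe C B → AbsCont C A → OpLe C S := by
  rw [isPosOp_iff_nonneg] at hA hB hS
  choose T hT0 hT using fun n : ℕ =>
    exists_isParallelSum hB (smul_nonneg (Nat.cast_nonneg (α := ℝ) n) hA)
  have hSsa : IsSelfAdjoint S := .of_nonneg hS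
  have hSA : AbsCont S A := hshort.absCont hA hT0 hT hSsa
  have hmax : ∀ C, 0 ≤ C → C ≤ B → AbsCont C A → C ≤ S := fun C hC hCB hCA =>
    hCA.le_of_forall_le (.of_nonneg hC) hSsa fun C' hC' hC'C c hC'A =>
      hshort.le_of_le_smul hA hT0 hT hSsa hC' (hC'C.trans hCB) hC'A
  refine ⟨(opLe_iff_le S B).mpr (hshort.le hA hT0 hT hSsa (.of_nonneg hB)), hSA,
    singOp_sub_of_isGreatest hS hSA hmax, fun C hC hCB hCA => ?_⟩
  rw [isPosOp_iff_nonneg] at hC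
  rw [opLe_iff_le] at hCB ⊢
  exact hmax C hC hCB hCA
end

section
/- Let A and B be positive bounded operators on a complex Hilbert space H, and let S be a positive operator such that S[x] = sup_{n∈ℕ} inf_{y∈H} (B[x−y] + n·A[y]) for all x ∈ H (i.e. S = [A]B). Then S is an extreme point of the operator interval [0,B], and A + S is an extreme point of the operator interval [0, A+B]. -/
open scoped ComplexOrder

/-! If `S = a • C₁ + b • C₂` with `C₁, C₂` in the order interval, then the quadratic form of
`a • (C₁ - S)` is bounded in absolute value both by `S` (resp. `A + S`) and by `B - S`, and such a
form vanishes. Indeed, for every `x`, almost minimizers `y` of `B[x - y] + n A[y]` with `n` large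
make `(B - S)[x - y]`, `A[y]` and `S[y]` small while `B[y]` stays bounded, and a Cauchy–Schwarz
inequality for forms dominated by `B - S` controls the cross term of `x = (x - y) + y`.
That `S[y]` is small comes from the uniform convexity of `B[x - ·]`: two almost minimizers are
close in `B`, so `(B : n A)[y]` is at most about `n A[y']` for an almost minimizer `y'` with
`A[y']` arbitrarily small. -/

open Filter Topology

lemma nonpos_of_eventually_natCast_mul_le {a b : ℝ} (h : ∀ᶠ m : ℕ in atTop, (m : ℝ) * a ≤ b) :
    a ≤ 0 := by
  by_contra! ha
  obtain ⟨m, hm, hm'⟩ :=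
    (h.and ((tendsto_natCast_atTop_atTop.atTop_mul_const ha).eventually_gt_atTop b)).exists
  linarith

section

variable {H : Type*} [NormedAddCommGroup H] [InnerProductSpace ℂ H]

lemma QF_nonneg {A : H →L[ℂ] H} (hA : IsPosOp A) (x : H) : 0 ≤ QF A x :=
  (Complex.le_def.mp (hA x)).1

lemma IsPosOp.inner_self_eq {A : H →L[ℂ] H} (hA : IsPosOp A) (x : H) :
    inner ℂ (A x) x = (QF A x : ℂ) :=
  Complex.ext rfl (Complex.le_def.mp (hA x)).2.symm

lemma QF_add (A B : H →L[ℂ] H) (x : H) : QF (A + B) x = QF A x + QF B x := by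
  simp [QF]

lemma QF_sub (A B : H →L[ℂ] H) (x : H) : QF (A - B) x = QF A x - QF B x := by
  simp [QF]

lemma QF_smul (c : ℝ) (A : H →L[ℂ] H) (x : H) : QF (c • A) x = c * QF A x := by
  simp [QF]

lemma QF_smul_add (E : H →L[ℂ] H) (s : ℝ) (u v : H) :
    QF E (s • u + v) = s ^ 2 * QF E u + s * (QF E (u + v) - QF E u - QF E v) + QF E v := by
  simp [QF]
  ring

lemma QF_smul_vec (E : H →L[ℂ] H) (s : ℝ) (u : H) : QF E (s • u) = s ^ 2 * QF E u := by
  simp [QF]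
  ring

lemma QF_neg_vec (E : H →L[ℂ] H) (u : H) : QF E (-u) = QF E u := by
  simp [QF]

lemma QF_add_add_QF_sub (E : H →L[ℂ] H) (u v : H) :
    QF E (u + v) + QF E (u - v) = 2 * QF E u + 2 * QF E v := by
  simp [QF]
  ring

lemma QF_add_le {P : H →L[ℂ] H} (hP : IsPosOp P) (u v : H) :
    QF P (u + v) ≤ 2 * QF P u + 2 * QF P v := by
  linarith [QF_add_add_QF_sub P u v, QF_nonneg hP (u - v)]

lemma QF_midpoint (E : H →L[ℂ] H) (u v : H) :
    QF E ((1 / 2 : ℝ) • (u + v)) = (QF E u + QF E v) / 2 - QF E (u - v) / 4 := by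
  rw [QF_smul_vec]
  linarith [QF_add_add_QF_sub E u v]

lemma sq_QF_add_sub_le {E Q : H →L[ℂ] H} (hE : ∀ w, |QF E w| ≤ QF Q w) (u v : H) :
    (QF E (u + v) - QF E u - QF E v) ^ 2 ≤ 4 * QF Q u * QF Q v := by
  set c := QF E (u + v) - QF E u - QF E v with hc
  have hquad (s : ℝ) : 0 ≤ QF Q u * (s * s) + (-c) * s + QF Q v := by
    have hE_diff : QF E (s • u + v) - QF E (s • u - v) = 2 * s * c := by
      rw [sub_eq_add_neg _ v, QF_smul_add, QF_smul_add, QF_neg_vec, ← sub_eq_add_neg]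
      linear_combination (-s) * QF_add_add_QF_sub E u v - 2 * s * hc
    have hQ_sum : QF Q (s • u + v) + QF Q (s • u - v) = 2 * s ^ 2 * QF Q u + 2 * QF Q v := by
      rw [QF_add_add_QF_sub, QF_smul_vec]
      ring
    linarith [le_abs_self (QF E (s • u + v)), neg_abs_le (QF E (s • u - v)),
      hE (s • u + v), hE (s • u - v)]
  have := discrim_le_zero hquad
  rw [discrim] at this
  linarith

lemma abs_QF_add_sub_le {E Q : H →L[ℂ] H} (hE : ∀ w, |QF E w| ≤ QF Q w) (u v : H) :
    |QF E (u + v) - QF E u - QF E v| ≤ √(4 * QF Q u * QF Q v) :=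
  Real.abs_le_sqrt (sq_QF_add_sub_le hE u v)

lemma QF_eq_zero_of_tendsto {E P Q : H →L[ℂ] H} (hP : ∀ w, |QF E w| ≤ QF P w)
    (hQ : ∀ w, |QF E w| ≤ QF Q w) {x : H} {y : ℕ → H} {C : ℝ}
    (hxy : Tendsto (fun k => QF Q (x - y k)) atTop (𝓝 0))
    (hy : Tendsto (fun k => QF P (y k)) atTop (𝓝 0)) (hC : ∀ k, QF Q (y k) ≤ C) :
    QF E x = 0 := by
  have hbound (k : ℕ) :
      |QF E x| ≤ QF Q (x - y k) + QF P (y k) + √(4 * QF Q (x - y k) * C) := by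
    have hcross := abs_QF_add_sub_le hQ (x - y k) (y k)
    rw [sub_add_cancel] at hcross
    have hsqrt : √(4 * QF Q (x - y k) * QF Q (y k)) ≤ √(4 * QF Q (x - y k) * C) :=
      Real.sqrt_le_sqrt (mul_le_mul_of_nonneg_left (hC k)
        (by linarith [(abs_nonneg _).trans (hQ (x - y k))]))
    calc |QF E x| = |QF E (x - y k) + QF E (y k) + (QF E x - QF E (x - y k) - QF E (y k))| := by
          ring_nf
      _ ≤ |QF E (x - y k)| + |QF E (y k)| + |QF E x - QF E (x - y k) - QF E (y k)| :=
          abs_add_three _ _ _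
      _ ≤ _ := by linarith [hQ (x - y k), hP (y k)]
  have hlim : Tendsto (fun k => QF Q (x - y k) + QF P (y k) + √(4 * QF Q (x - y k) * C))
      atTop (𝓝 0) := by
    simpa using (hxy.add hy).add ((hxy.const_mul 4).mul_const C).sqrt
  exact abs_nonpos_iff.mp (ge_of_tendsto' hlim hbound)

lemma IsPosOp.add {A B : H →L[ℂ] H} (hA : IsPosOp A) (hB : IsPosOp B) : IsPosOp (A + B) :=
  fun x => by simpa [inner_add_left] using add_nonneg (hA x) (hB x)

lemma opLe_of_QF_le {A B : H →L[ℂ] H} (hA : IsPosOp A) (hB : IsPosOp B)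
    (h : ∀ x, QF A x ≤ QF B x) : OpLe A B := fun x => by
  rw [sub_apply, inner_sub_left, hA.inner_self_eq, hB.inner_self_eq,
    ← Complex.ofReal_sub, Complex.zero_le_real, sub_nonneg]
  exact h x

lemma eq_of_QF_eq {A B : H →L[ℂ] H} (hA : IsPosOp A) (hB : IsPosOp B)
    (h : ∀ x, QF A x = QF B x) : A = B := by
  have := (ext_inner_map (A : H →ₗ[ℂ] H) B).mp fun x => by
    simp only [ContinuousLinearMap.coe_coe, hA.inner_self_eq, hB.inner_self_eq, h]
  exact ContinuousLinearMap.coe_injective this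

def FormDisjoint (P Q : H →L[ℂ] H) : Prop :=
  ∀ E : H →L[ℂ] H, (∀ w, |QF E w| ≤ QF P w) → (∀ w, |QF E w| ≤ QF Q w) → ∀ w, QF E w = 0

lemma FormDisjoint.mono_left {P P' Q : H →L[ℂ] H} (h : FormDisjoint P Q)
    (hP : ∀ w, QF P' w ≤ QF P w) : FormDisjoint P' Q :=
  fun E hEP hEQ => h E (fun w => (hEP w).trans (hP w)) hEQ

lemma mem_extremePoints_of_formDisjoint {X U : H →L[ℂ] H} (hX : IsPosOp X) (hXU : OpLe X U)
    (h : FormDisjoint X (U - X)) :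
    X ∈ Set.extremePoints ℝ {C : H →L[ℂ] H | IsPosOp C ∧ OpLe C U} := by
  refine ⟨⟨hX, hXU⟩, ?_⟩
  rintro C₁ ⟨hC₁, hC₁U⟩ C₂ ⟨hC₂, hC₂U⟩ ⟨a, b, ha, hb, hab, hC⟩
  -- `a • (C₁ - X) = (a * b) • (C₁ - C₂)` lies between `-X` and `X` and between `X - U` and `U - X`.
  have hdom (w : H) :
      |QF (a • (C₁ - X)) w| ≤ QF X w ∧ |QF (a • (C₁ - X)) w| ≤ QF (U - X) w := by
    have hXw : QF X w = a * QF C₁ w + b * QF C₂ w := by rw [← hC, QF_add, QF_smul, QF_smul]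
    have h₁ := QF_nonneg hC₁ w
    have h₂ := QF_nonneg hC₂ w
    have h₁U := QF_nonneg hC₁U w
    have h₂U := QF_nonneg hC₂U w
    simp only [QF_smul, QF_sub, abs_le, hXw] at h₁U h₂U ⊢
    obtain rfl : b = 1 - a := by linarith
    have haa := mul_nonneg ha.le ha.le
    have hab' := mul_nonneg ha.le hb.le
    have hbb := mul_nonneg hb.le hb.le
    refine ⟨⟨?_, ?_⟩, ?_, ?_⟩
    · nlinarith [mul_nonneg ha.le h₁, mul_nonneg hab' h₁, mul_nonneg hbb h₂]
    · nlinarith [mul_nonneg haa h₁, mul_nonneg hb.le h₂, mul_nonneg hab' h₂]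
    · nlinarith [mul_nonneg haa h₁U, mul_nonneg hb.le h₂U, mul_nonneg hab' h₂U]
    · nlinarith [mul_nonneg ha.le h₁U, mul_nonneg hab' h₁U, mul_nonneg hbb h₂U]
  refine eq_of_QF_eq hC₁ hX fun w => ?_
  have hzero := h _ (fun w => (hdom w).1) (fun w => (hdom w).2) w
  rw [QF_smul, QF_sub] at hzero
  linarith [(mul_eq_zero.mp hzero).resolve_left ha.ne']

/-- The quadratic form of the parallel sum of `B` and `n • A`. -/
noncomputable def parallelSumForm (A B : H →L[ℂ] H) (n : ℕ) (x : H) : ℝ :=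
  ⨅ y : H, (QF B (x - y) + (n : ℝ) * QF A y)

variable {A B S : H →L[ℂ] H}

lemma parallelSumForm_le (hA : IsPosOp A) (hB : IsPosOp B) (n : ℕ) (x y : H) :
    parallelSumForm A B n x ≤ QF B (x - y) + n * QF A y :=
  ciInf_le ⟨0, by
    rintro _ ⟨z, rfl⟩
    exact add_nonneg (QF_nonneg hB _) (mul_nonneg n.cast_nonneg (QF_nonneg hA z))⟩ y

lemma parallelSumForm_le_left (hA : IsPosOp A) (hB : IsPosOp B) (n : ℕ) (x : H) :
    parallelSumForm A B n x ≤ QF B x := by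
  simpa [QF] using parallelSumForm_le hA hB n x 0

lemma parallelSumForm_le_right (hA : IsPosOp A) (hB : IsPosOp B) (n : ℕ) (x : H) :
    parallelSumForm A B n x ≤ n * QF A x := by
  simpa [QF] using parallelSumForm_le hA hB n x x

lemma parallelSumForm_add_le (hA : IsPosOp A) (hB : IsPosOp B) (n : ℕ) (u v : H) :
    parallelSumForm A B n (u + v) ≤ 2 * parallelSumForm A B n u + 2 * parallelSumForm A B n v := by
  have hyz (y z : H) : parallelSumForm A B n (u + v) / 2 - (QF B (v - z) + n * QF A z)
      ≤ QF B (u - y) + n * QF A y := by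
    have h₁ := parallelSumForm_le hA hB n (u + v) (y + z)
    rw [show u + v - (y + z) = (u - y) + (v - z) by abel] at h₁
    nlinarith [QF_add_le hB (u - y) (v - z), QF_add_le hA y z, (n.cast_nonneg : (0 : ℝ) ≤ n)]
  have hz (z : H) : parallelSumForm A B n (u + v) / 2 - parallelSumForm A B n u
      ≤ QF B (v - z) + n * QF A z := by
    have h : parallelSumForm A B n (u + v) / 2 - (QF B (v - z) + n * QF A z)
        ≤ parallelSumForm A B n u := le_ciInf (hyz · z)
    linarith
  have h : parallelSumForm A B n (u + v) / 2 - parallelSumForm A B n u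
      ≤ parallelSumForm A B n v := le_ciInf hz
  linarith

lemma parallelSumForm_add_QF_sub_le (hA : IsPosOp A) (hB : IsPosOp B) {n m m' : ℕ}
    (hm : n ≤ m) (hm' : n ≤ m') (x y y' : H) :
    parallelSumForm A B n x + QF B (y - y') / 4 ≤
      ((QF B (x - y) + m * QF A y) + (QF B (x - y') + m' * QF A y')) / 2 := by
  have h := parallelSumForm_le hA hB n x ((1 / 2 : ℝ) • (y + y'))
  rw [show x - (1 / 2 : ℝ) • (y + y') = (1 / 2 : ℝ) • ((x - y) + (x - y')) by module,
    QF_midpoint, QF_midpoint, show x - y - (x - y') = -(y - y') by abel, QF_neg_vec] at h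
  have hmA : (n : ℝ) * QF A y ≤ m * QF A y :=
    mul_le_mul_of_nonneg_right (by exact_mod_cast hm) (QF_nonneg hA y)
  have hmA' : (n : ℝ) * QF A y' ≤ m' * QF A y' :=
    mul_le_mul_of_nonneg_right (by exact_mod_cast hm') (QF_nonneg hA y')
  nlinarith [QF_nonneg hA (y - y'), (n.cast_nonneg : (0 : ℝ) ≤ n)]

lemma parallelSumForm_le_of_isShort (hA : IsPosOp A) (hB : IsPosOp B) (hshort : IsShort A B S)
    (n : ℕ) (x : H) : parallelSumForm A B n x ≤ QF S x := by
  rw [hshort x]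
  exact le_ciSup (f := fun n => parallelSumForm A B n x)
    ⟨QF B x, by rintro _ ⟨m, rfl⟩; exact parallelSumForm_le_left hA hB m x⟩ n

lemma QF_le_of_isShort (hA : IsPosOp A) (hB : IsPosOp B) (hshort : IsShort A B S) (x : H) :
    QF S x ≤ QF B x := by
  rw [hshort x]
  exact ciSup_le fun n => parallelSumForm_le_left hA hB n x

lemma exists_lt_parallelSumForm_of_isShort (hshort : IsShort A B S) (x : H) {c : ℝ}
    (h : c < QF S x) : ∃ n, c < parallelSumForm A B n x := by
  rw [hshort x] at h
  exact exists_lt_of_lt_ciSup h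

lemma exists_almost_minimizer_lt (hA : IsPosOp A) (hB : IsPosOp B) (hshort : IsShort A B S)
    (x : H) (m : ℕ) {c : ℝ} (h : QF S x < c) : ∃ y, QF B (x - y) + m * QF A y < c :=
  exists_lt_of_ciInf_lt (f := fun y => QF B (x - y) + m * QF A y)
    ((parallelSumForm_le_of_isShort hA hB hshort m x).trans_lt h)

lemma QF_le_of_almost_minimizer (hA : IsPosOp A) (hB : IsPosOp B) (hshort : IsShort A B S)
    {x y : H} {δ : ℝ} (hδ : 0 < δ) {n₀ m : ℕ} (hn₀ : QF S x - δ ≤ parallelSumForm A B n₀ x)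
    (hm : n₀ ≤ m) (hy : QF B (x - y) + m * QF A y ≤ QF S x + δ) :
    QF S y ≤ 16 * δ := by
  rw [hshort y]
  refine ciSup_le fun n => ?_
  change parallelSumForm A B n y ≤ 16 * δ
  suffices h : ∀ᶠ m' : ℕ in atTop,
      (m' : ℝ) * (parallelSumForm A B n y - 16 * δ) ≤ 2 * n * (QF S x + δ) by
    linarith [nonpos_of_eventually_natCast_mul_le h]
  filter_upwards [eventually_ge_atTop n₀] with m' hm'
  obtain ⟨y', hy'⟩ := exists_almost_minimizer_lt hA hB hshort x m' (lt_add_of_pos_right _ hδ)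
  have hyy' : QF B (y - y') ≤ 8 * δ := by
    linarith [parallelSumForm_add_QF_sub_le hA hB hm hm' x y y']
  have hFy : parallelSumForm A B n y ≤ 16 * δ + 2 * n * QF A y' := by
    have h := parallelSumForm_add_le hA hB n (y - y') y'
    rw [sub_add_cancel] at h
    linarith [parallelSumForm_le_left hA hB n (y - y'), parallelSumForm_le_right hA hB n y']
  have hAy' : m' * QF A y' ≤ QF S x + δ := by linarith [QF_nonneg hB (x - y')]
  nlinarith [(m'.cast_nonneg : (0 : ℝ) ≤ m'), (n.cast_nonneg : (0 : ℝ) ≤ n)]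

lemma exists_almost_minimizer (hA : IsPosOp A) (hB : IsPosOp B) (hS : IsPosOp S)
    (hshort : IsShort A B S) (x : H) {δ : ℝ} (hδ : 0 < δ) :
    ∃ y, QF A y ≤ δ ∧ QF S y ≤ 16 * δ ∧ QF B (x - y) ≤ QF S x + δ := by
  obtain ⟨n₀, hn₀⟩ := exists_lt_parallelSumForm_of_isShort hshort x (sub_lt_self _ hδ)
  obtain ⟨m, hm⟩ := exists_nat_ge ((QF S x + δ) / δ)
  obtain ⟨y, hy⟩ := exists_almost_minimizer_lt hA hB hshort x (max n₀ m) (lt_add_of_pos_right _ hδ)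
  have hAy : (max n₀ m : ℕ) * QF A y ≤ QF S x + δ := by linarith [QF_nonneg hB (x - y)]
  refine ⟨y, ?_, QF_le_of_almost_minimizer hA hB hshort hδ hn₀.le (le_max_left n₀ m) hy.le,
    by linarith [mul_nonneg (max n₀ m).cast_nonneg (QF_nonneg hA y)]⟩
  have hmax : (QF S x + δ) / δ ≤ (max n₀ m : ℕ) := hm.trans (by exact_mod_cast le_max_right n₀ m)
  rw [div_le_iff₀ hδ] at hmax
  nlinarith [QF_nonneg hS x, QF_nonneg hA y]

lemma exists_seq_tendsto_of_isShort (hA : IsPosOp A) (hB : IsPosOp B) (hS : IsPosOp S)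
    (hshort : IsShort A B S) (x : H) :
    ∃ y : ℕ → H, Tendsto (fun k => QF (B - S) (x - y k)) atTop (𝓝 0) ∧
      Tendsto (fun k => QF (A + S) (y k)) atTop (𝓝 0) ∧
      ∀ k, QF (B - S) (y k) ≤ 2 * QF B x + 2 * QF S x + 2 := by
  set δ : ℕ → ℝ := fun k => 1 / ((k : ℝ) + 1)
  have hδ_pos (k : ℕ) : 0 < δ k := Nat.one_div_pos_of_nat
  have hδ_le (k : ℕ) : δ k ≤ 1 := Nat.one_div_le_one_div (Nat.zero_le k) |>.trans (by simp)
  have hδ : Tendsto δ atTop (𝓝 0) := tendsto_one_div_add_atTop_nhds_zero_nat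
  choose y hAy hSy hBxy using fun k => exists_almost_minimizer hA hB hS hshort x (hδ_pos k)
  have hT_nonneg (w : H) : 0 ≤ QF (B - S) w := by
    rw [QF_sub]; linarith [QF_le_of_isShort hA hB hshort w]
  -- `S[x] ≈ S[x - y] + S[y]` up to the Cauchy–Schwarz cross term, and `S[y]` is small.
  have hTxy (k : ℕ) : QF (B - S) (x - y k) ≤
      17 * δ k + √(4 * (QF S x + δ k) * (16 * δ k)) := by
    have hcross := abs_QF_add_sub_le (fun w => (abs_of_nonneg (QF_nonneg hS w)).le) (x - y k) (y k)
    rw [sub_add_cancel] at hcross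
    have hsqrt : √(4 * QF S (x - y k) * QF S (y k)) ≤ √(4 * (QF S x + δ k) * (16 * δ k)) := by
      refine Real.sqrt_le_sqrt (mul_le_mul (mul_le_mul_of_nonneg_left ?_ four_pos.le) (hSy k)
        (QF_nonneg hS _) (by nlinarith [QF_nonneg hS x, hδ_pos k]))
      linarith [QF_le_of_isShort hA hB hshort (x - y k), hBxy k]
    rw [QF_sub]
    linarith [abs_le.mp hcross, hSy k, hBxy k]
  refine ⟨y, ?_, ?_, fun k => ?_⟩
  · refine squeeze_zero (fun k => hT_nonneg _) hTxy ?_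
    have hcont : Continuous fun d : ℝ => 17 * d + √(4 * (QF S x + d) * (16 * d)) := by fun_prop
    simpa [Function.comp_def] using (hcont.tendsto 0).comp hδ
  · refine squeeze_zero (fun k => QF_nonneg (hA.add hS) _) (fun k => ?_)
      (by simpa using hδ.const_mul 17)
    rw [QF_add]
    linarith [hAy k, hSy k]
  · have hBy := QF_add_le hB x (-(x - y k))
    rw [QF_neg_vec, show x + -(x - y k) = y k by abel] at hBy
    rw [QF_sub]
    linarith [QF_nonneg hS (y k), hBxy k, hδ_le k]

lemma formDisjoint_of_isShort (hA : IsPosOp A) (hB : IsPosOp B) (hS : IsPosOp S)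
    (hshort : IsShort A B S) : FormDisjoint (A + S) (B - S) := by
  intro E hEP hEQ x
  obtain ⟨y, hxy, hy, hC⟩ := exists_seq_tendsto_of_isShort hA hB hS hshort x
  exact QF_eq_zero_of_tendsto hEP hEQ hxy hy hC

end

theorem short_is_extreme_point_general
    {H : Type*} [NormedAddCommGroup H] [InnerProductSpace ℂ H]
    (A B S : H →L[ℂ] H) (hA : IsPosOp A) (hB : IsPosOp B) (hS : IsPosOp S)
    (hshort : IsShort A B S) :
    S ∈ Set.extremePoints ℝ {C : H →L[ℂ] H | IsPosOp C ∧ OpLe C B} ∧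
      A + S ∈ Set.extremePoints ℝ {C : H →L[ℂ] H | IsPosOp C ∧ OpLe C (A + B)} := by
  have hSB : OpLe S B := opLe_of_QF_le hS hB (QF_le_of_isShort hA hB hshort)
  have hdisj := formDisjoint_of_isShort hA hB hS hshort
  have hsub : A + B - (A + S) = B - S := by abel
  constructor
  · refine mem_extremePoints_of_formDisjoint hS hSB (hdisj.mono_left fun w => ?_)
    rw [QF_add]
    linarith [QF_nonneg hA w]
  · refine mem_extremePoints_of_formDisjoint (hA.add hS) ?_ (by rwa [hsub])
    rwa [OpLe, hsub]

theorem short_is_extreme_point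
    {H : Type*} [NormedAddCommGroup H] [InnerProductSpace ℂ H] [CompleteSpace H]
    (A B S : H →L[ℂ] H) (hA : IsPosOp A) (hB : IsPosOp B) (hS : IsPosOp S)
    (hshort : IsShort A B S) :
    S ∈ Set.extremePoints ℝ {C : H →L[ℂ] H | IsPosOp C ∧ OpLe C B} ∧
      A + S ∈ Set.extremePoints ℝ {C : H →L[ℂ] H | IsPosOp C ∧ OpLe C (A + B)} :=
  short_is_extreme_point_general A B S hA hB hS hshort
end

section
/- Let t be a nonnegative form on a complex vector space X. Then there exist a complex Hilbert space K and a map Φ from the set [0,t] of nonnegative forms w on X with w ≤ t to the set of positive contractions on K (continuous linear A : K → K with 0 ≤ A ≤ I in the Loewner order) such that Φ is a bijection between these two sets and, for all w, w' ∈ [0,t], w ≤ w' if and only if Φ(w) ≤ Φ(w'). -/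
open scoped ComplexOrder

/-- A sesquilinear form (linear in the first, conjugate-linear in the second variable)
`t : X →ₗ[ℂ] X →ₗ⋆[ℂ] ℂ` is nonnegative if `t(x,x) ≥ 0` for all `x`. -/
def IsNNForm {X : Type*} [AddCommGroup X] [Module ℂ X]
    (t : X →ₗ[ℂ] X →ₗ⋆[ℂ] ℂ) : Prop :=
  ∀ x : X, 0 ≤ t x x

/-- The quadratic form of a form: `t[x] = t(x,x)`, viewed as a real number. -/
def FQ {X : Type*} [AddCommGroup X] [Module ℂ X]
    (t : X →ₗ[ℂ] X →ₗ⋆[ℂ] ℂ) (x : X) : ℝ :=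
  (t x x).re

/-- The order on forms: `t ≤ w` iff `t[x] ≤ w[x]` for all `x`. -/
def FLe {X : Type*} [AddCommGroup X] [Module ℂ X]
    (t w : X →ₗ[ℂ] X →ₗ⋆[ℂ] ℂ) : Prop :=
  ∀ x : X, FQ t x ≤ FQ w x

/-- `t` and `w` are singular: the only nonnegative form below both is the zero form. -/
def SingForm {X : Type*} [AddCommGroup X] [Module ℂ X]
    (t w : X →ₗ[ℂ] X →ₗ⋆[ℂ] ℂ) : Prop :=
  ∀ s : X →ₗ[ℂ] X →ₗ⋆[ℂ] ℂ, IsNNForm s → FLe s t → FLe s w → s = 0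

universe u

/-!
Equip `X` with the semi-inner product `⟪x, y⟫ = t(y, x)` and let `K` be its Hausdorff completion.
By Cauchy–Schwarz, every `w ∈ [0,t]` satisfies `‖w(x, y)‖ ≤ ‖x‖ ‖y‖` in `K`, so the Riesz
representation theorem yields a unique operator `A` on `K` with `w(x, y) = ⟪A y, x⟫` on the dense
image of `X`. Conversely every operator defines such a form, and since positivity of an operator
can be tested on a dense subspace, `A ↦ w` is an order isomorphism from the positive contractions
onto `[0,t]`; `Φ` is its inverse.
-/

open UniformSpace Set Function

section NonnegForm

variable {X : Type*} [AddCommGroup X] [Module ℂ X] {t w w' : X →ₗ[ℂ] X →ₗ⋆[ℂ] ℂ}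

lemma IsNNForm.im_eq_zero (ht : IsNNForm t) (x : X) : (t x x).im = 0 :=
  ((Complex.nonneg_iff.mp (ht x)).2).symm

lemma IsNNForm.fQ_nonneg (ht : IsNNForm t) (x : X) : 0 ≤ FQ t x :=
  (Complex.nonneg_iff.mp (ht x)).1

/-- Hermitian symmetry, by polarization: the imaginary parts of `t[x + y]` and `t[x + i y]`
vanish. -/
lemma IsNNForm.conj_apply (ht : IsNNForm t) (x y : X) : starRingEnd ℂ (t x y) = t y x := by
  have hsum : t (x + y) (x + y) = t x x + t x y + t y x + t y y := by
    simp only [map_add, LinearMap.add_apply]; ring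
  have hsumI : t (x + Complex.I • y) (x + Complex.I • y)
      = t x x - Complex.I * t x y + Complex.I * t y x + t y y := by
    simp only [map_add, map_smul, map_smulₛₗ, LinearMap.add_apply, LinearMap.smul_apply,
      smul_eq_mul, Complex.conj_I]
    linear_combination (-t y y) * Complex.I_sq
  have h₁ := ht.im_eq_zero (x + y)
  have h₂ := ht.im_eq_zero (x + Complex.I • y)
  rw [hsum] at h₁
  rw [hsumI] at h₂
  simp only [Complex.add_im, Complex.sub_im, Complex.mul_im, Complex.I_re, Complex.I_im,
    ht.im_eq_zero x, ht.im_eq_zero y] at h₁ h₂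
  apply Complex.ext <;> simp only [Complex.conj_re, Complex.conj_im] <;> linarith

lemma isNNForm_sub_iff_fLe (hw : IsNNForm w) (hw' : IsNNForm w') :
    IsNNForm (w' - w) ↔ FLe w w' := by
  refine forall_congr' fun x => ?_
  rw [LinearMap.sub_apply, LinearMap.sub_apply, sub_nonneg, Complex.le_def, FQ, FQ,
    hw.im_eq_zero x, hw'.im_eq_zero x]
  simp

end NonnegForm

section PreHilbert

variable {X : Type*} [AddCommGroup X] [Module ℂ X] {t w : X →ₗ[ℂ] X →ₗ⋆[ℂ] ℂ}

variable (t) in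
def FormSpace (_ht : IsNNForm t) : Type _ := X

namespace FormSpace

variable (ht : IsNNForm t)

instance : AddCommGroup (FormSpace t ht) := inferInstanceAs (AddCommGroup X)

instance : Module ℂ (FormSpace t ht) := inferInstanceAs (Module ℂ X)

def equiv : X ≃ₗ[ℂ] FormSpace t ht := LinearEquiv.refl ℂ X

@[reducible]
def core : PreInnerProductSpace.Core ℂ (FormSpace t ht) where
  inner a b := t ((equiv ht).symm b) ((equiv ht).symm a)
  conj_inner_symm _ _ := ht.conj_apply _ _
  re_inner_nonneg _ := ht.fQ_nonneg _
  add_left a b _ := map_add (t _) a b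
  smul_left a _ r := map_smulₛₗ (t _) r a

noncomputable instance : SeminormedAddCommGroup (FormSpace t ht) :=
  @InnerProductSpace.Core.toSeminormedAddCommGroup ℂ (FormSpace t ht) _ _ _ (core ht)

noncomputable instance : InnerProductSpace ℂ (FormSpace t ht) := InnerProductSpace.ofCore (core ht)

lemma inner_equiv (x y : X) : inner ℂ (equiv ht x) (equiv ht y) = t y x := rfl

lemma norm_equiv (x : X) : ‖equiv ht x‖ = √(FQ t x) := rfl

end FormSpace

lemma IsNNForm.norm_apply_le (ht : IsNNForm t) (x y : X) : ‖t x y‖ ≤ √(FQ t x) * √(FQ t y) := by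
  rw [← FormSpace.inner_equiv ht, ← FormSpace.norm_equiv ht, ← FormSpace.norm_equiv ht, mul_comm]
  exact norm_inner_le_norm _ _

lemma IsNNForm.norm_apply_le_of_fLe (hw : IsNNForm w) (hwt : FLe w t) (x y : X) :
    ‖w x y‖ ≤ √(FQ t x) * √(FQ t y) :=
  (hw.norm_apply_le x y).trans <| by gcongr <;> exact hwt _

end PreHilbert

section DenseEmbedding

variable {𝕜 X K : Type*} [RCLike 𝕜] [AddCommGroup X] [Module 𝕜 X]
  [NormedAddCommGroup K] [InnerProductSpace 𝕜 K] {ι : X →ₗ[𝕜] K}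

variable (ι) in
def pullbackForm (A : K →L[𝕜] K) : X →ₗ[𝕜] X →ₗ⋆[𝕜] 𝕜 :=
  ((innerₛₗ 𝕜).flip ∘ₗ ι).compl₂ (A.toLinearMap ∘ₗ ι)

@[simp]
lemma pullbackForm_apply (A : K →L[𝕜] K) (x y : X) :
    pullbackForm ι A x y = inner 𝕜 (A (ι y)) (ι x) := rfl

lemma pullbackForm_sub (A B : K →L[𝕜] K) :
    pullbackForm ι (B - A) = pullbackForm ι B - pullbackForm ι A := by
  ext x y
  simp [inner_sub_left]

lemma pullbackForm_injective (hι : DenseRange ι) : Injective (pullbackForm ι) := by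
  intro A B hAB
  have hιA : ∀ y, A (ι y) = B (ι y) := fun y =>
    hι.eq_of_inner_left 𝕜 fun x => by
      simpa using congr($hAB x y)
  exact ContinuousLinearMap.coeFn_injective <| hι.equalizer A.continuous B.continuous (funext hιA)

lemma exists_pullbackForm_eq [CompleteSpace K] (hι : DenseRange ι) (w : X →ₗ[𝕜] X →ₗ⋆[𝕜] 𝕜)
    {C : ℝ} (hC : 0 ≤ C) (hw : ∀ x y, ‖w x y‖ ≤ C * ‖ι x‖ * ‖ι y‖) :
    ∃ A : K →L[𝕜] K, pullbackForm ι A = w := by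
  have hbound : ∀ y, ∀ x, ‖w.flip y x‖ ≤ C * ‖ι y‖ * ‖ι x‖ := fun y x => by
    simpa [mul_right_comm] using hw x y
  -- Riesz representation of the extension of `w(·, y)` to `K`
  let u : X → K := fun y =>
    (InnerProductSpace.toDual 𝕜 K).symm ((w.flip y).extendOfNorm ι)
  have hu : ∀ x y, inner 𝕜 (u y) (ι x) = w x y := fun x y => by
    simp [u, InnerProductSpace.toDual_symm_apply,
      LinearMap.extendOfNorm_eq hι ⟨_, hbound y⟩]
  have hu_norm : ∀ y, ‖u y‖ ≤ C * ‖ι y‖ := fun y => by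
    simpa [u] using LinearMap.opNorm_extendOfNorm_le hι (by positivity) (hbound y)
  let U : X →ₗ[𝕜] K :=
    { toFun := u
      map_add' := fun y y' => hι.eq_of_inner_left 𝕜 fun x => by simp [inner_add_left, hu]
      map_smul' := fun c y => hι.eq_of_inner_left 𝕜 fun x => by simp [inner_smul_left, hu] }
  refine ⟨U.extendOfNorm ι, LinearMap.ext₂ fun x y => ?_⟩
  rw [pullbackForm_apply, LinearMap.extendOfNorm_eq hι (f := U) ⟨C, hu_norm⟩]
  exact hu x y

end DenseEmbedding

section Positivity

variable {X K : Type*} [AddCommGroup X] [Module ℂ X] [NormedAddCommGroup K]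
  [InnerProductSpace ℂ K] {ι : X →ₗ[ℂ] K}

lemma isPosOp_iff_isNNForm_pullbackForm (hι : DenseRange ι) {A : K →L[ℂ] K} :
    IsPosOp A ↔ IsNNForm (pullbackForm ι A) :=
  ⟨fun hA x => hA (ι x),
    fun hA ξ => hι.induction_on ξ (isClosed_le continuous_const (by fun_prop)) hA⟩

lemma opLe_iff_fLe_pullbackForm (hι : DenseRange ι) {A B : K →L[ℂ] K} (hA : IsPosOp A)
    (hB : IsPosOp B) : OpLe A B ↔ FLe (pullbackForm ι A) (pullbackForm ι B) := by
  rw [OpLe, isPosOp_iff_isNNForm_pullbackForm hι, pullbackForm_sub]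
  exact isNNForm_sub_iff_fLe ((isPosOp_iff_isNNForm_pullbackForm hι).1 hA)
    ((isPosOp_iff_isNNForm_pullbackForm hι).1 hB)

end Positivity

section FormHilbertSpace

variable {X : Type*} [AddCommGroup X] [Module ℂ X] {t : X →ₗ[ℂ] X →ₗ⋆[ℂ] ℂ} (ht : IsNNForm t)

variable (t) in
abbrev FormHilbertSpace : Type _ := Completion (FormSpace t ht)

noncomputable def formEmbedding : X →ₗ[ℂ] FormHilbertSpace t ht :=
  Completion.toComplL.toLinearMap ∘ₗ (FormSpace.equiv ht).toLinearMap

lemma denseRange_formEmbedding : DenseRange (formEmbedding ht) :=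
  Completion.denseRange_coe.comp (FormSpace.equiv ht).surjective.denseRange
    (Completion.continuous_coe _)

lemma inner_formEmbedding (x y : X) :
    inner ℂ (formEmbedding ht x) (formEmbedding ht y) = t y x := by
  simp [formEmbedding, FormSpace.inner_equiv]

lemma norm_formEmbedding (x : X) : ‖formEmbedding ht x‖ = √(FQ t x) := by
  simp [formEmbedding, FormSpace.norm_equiv]

lemma pullbackForm_formEmbedding_one : pullbackForm (formEmbedding ht) 1 = t := by
  ext x y
  simp [inner_formEmbedding]

lemma bijOn_pullbackForm_formEmbedding :
    BijOn (pullbackForm (formEmbedding ht)) {A | IsPosOp A ∧ OpLe A 1}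
      {w | IsNNForm w ∧ FLe w t} := by
  have hι := denseRange_formEmbedding ht
  have hpos (A : FormHilbertSpace t ht →L[ℂ] _) :
      IsPosOp A ↔ IsNNForm (pullbackForm (formEmbedding ht) A) :=
    isPosOp_iff_isNNForm_pullbackForm hι
  have hone : IsPosOp (1 : FormHilbertSpace t ht →L[ℂ] _) := by
    rwa [hpos, pullbackForm_formEmbedding_one]
  have hcontr {A} (hA : IsPosOp A) : OpLe A 1 ↔ FLe (pullbackForm (formEmbedding ht) A) t := by
    rw [opLe_iff_fLe_pullbackForm hι hA hone, pullbackForm_formEmbedding_one]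
  refine ⟨fun A ⟨hA, hA1⟩ => ⟨(hpos A).1 hA, (hcontr hA).1 hA1⟩,
    (pullbackForm_injective hι).injOn, fun w ⟨hw, hwt⟩ => ?_⟩
  obtain ⟨A, rfl⟩ := exists_pullbackForm_eq hι w zero_le_one fun x y => by
    simpa [norm_formEmbedding] using hw.norm_apply_le_of_fLe hwt x y
  have hA := (hpos A).2 hw
  exact ⟨A, ⟨hA, (hcontr hA).2 hwt⟩, rfl⟩

end FormHilbertSpace

theorem form_interval_order_isomorphic_to_operator_interval
    {X : Type u} [AddCommGroup X] [Module ℂ X]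
    (t : X →ₗ[ℂ] X →ₗ⋆[ℂ] ℂ) (ht : IsNNForm t) :
    ∃ (K : Type u) (_ : NormedAddCommGroup K) (_ : InnerProductSpace ℂ K)
      (_ : CompleteSpace K) (Φ : (X →ₗ[ℂ] X →ₗ⋆[ℂ] ℂ) → (K →L[ℂ] K)),
      Set.BijOn Φ {w : X →ₗ[ℂ] X →ₗ⋆[ℂ] ℂ | IsNNForm w ∧ FLe w t}
        {A : K →L[ℂ] K | IsPosOp A ∧ OpLe A 1} ∧
      ∀ w w' : X →ₗ[ℂ] X →ₗ⋆[ℂ] ℂ, (IsNNForm w ∧ FLe w t) → (IsNNForm w' ∧ FLe w' t) →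
        (FLe w w' ↔ OpLe (Φ w) (Φ w')) := by
  have hbij := bijOn_pullbackForm_formEmbedding ht
  have hinv := hbij.invOn_invFunOn
  have hΦ := hbij.symm hinv.symm
  refine ⟨FormHilbertSpace t ht, inferInstance, inferInstance, inferInstance, _, hΦ,
    fun w w' hw hw' => ?_⟩
  rw [opLe_iff_fLe_pullbackForm (denseRange_formEmbedding ht) (hΦ.mapsTo hw).1
    (hΦ.mapsTo hw').1, hinv.2 hw, hinv.2 hw']
end

section
/- Let t be a nonnegative form on a complex vector space X and let w be a nonnegative form with w ≤ t; let t − w denote the form (x,y) ↦ t(x,y) − w(x,y), which is again a nonnegative form. Then w is an extreme point of the convex set [0,t] (inside the complex vector space of sesquilinear forms on X, regarded as a real vector space) if and only if w and t − w are singular. -/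
open scoped ComplexOrder

/-!
If `w = a • w₁ + b • w₂` is a proper convex combination in `[0, t]`, then
`e = a • (w₁ - w) = b • (w - w₂)` satisfies `-w ≤ e ≤ w` and `-(t - w) ≤ e ≤ t - w`.
Cauchy–Schwarz for `w ± e` gives `|e(x, y)|² ≤ 2 w[x] w[y]`, and likewise for `t - w`, so for each
`y` a small multiple of the rank-one form `(x, x') ↦ e(x, y) * conj (e(x', y))` lies below both
`w` and `t - w`; singularity forces it to vanish, whence `e = 0`. Conversely, a nonzero `s`
below `w` and `t - w` makes `w` the midpoint of `w ± s` in `[0, t]`.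
-/

section

variable {X : Type*} [AddCommGroup X] [Module ℂ X] {p q e : X →ₗ[ℂ] X →ₗ⋆[ℂ] ℂ}

@[simp]
lemma fq_add (x : X) : FQ (p + q) x = FQ p x + FQ q x := by
  simp [FQ]

@[simp]
lemma fq_sub (x : X) : FQ (p - q) x = FQ p x - FQ q x := by
  simp [FQ]

@[simp]
lemma fq_smul (r : ℝ) (x : X) : FQ (r • p) x = r * FQ p x := by
  simp [FQ]

lemma isNNForm_iff : IsNNForm p ↔ ∀ x, (p x x).im = 0 ∧ 0 ≤ FQ p x := by
  simp only [IsNNForm, FQ, Complex.nonneg_iff, eq_comm (a := (0 : ℝ)), and_comm]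

namespace IsNNForm

lemma im_eq_zero_s10 (hp : IsNNForm p) (x : X) : (p x x).im = 0 :=
  (isNNForm_iff.mp hp x).1

lemma fq_nonneg (hp : IsNNForm p) (x : X) : 0 ≤ FQ p x :=
  (isNNForm_iff.mp hp x).2

lemma add (hp : IsNNForm p) (hq : IsNNForm q) : IsNNForm (p + q) :=
  fun x => add_nonneg (hp x) (hq x)

lemma smul (hp : IsNNForm p) {r : ℝ} (hr : 0 ≤ r) : IsNNForm (r • p) := fun x => by
  simpa [Complex.real_smul] using mul_nonneg (Complex.zero_le_real.mpr hr) (hp x)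

lemma sub_of_fLe (hq : IsNNForm q) (hp : IsNNForm p) (hpq : FLe p q) : IsNNForm (q - p) :=
  isNNForm_iff.mpr fun x => ⟨by simp [hq.im_eq_zero_s10, hp.im_eq_zero_s10], by simpa using hpq x⟩

lemma conj_apply_s10 (hp : IsNNForm p) (x y : X) : starRingEnd ℂ (p x y) = p y x := by
  have h₁ := hp.im_eq_zero_s10 (x + y)
  have h₂ := hp.im_eq_zero_s10 (x + Complex.I • y)
  simp only [map_add, map_smul, map_smulₛₗ, LinearMap.add_apply, LinearMap.smul_apply,
    smul_eq_mul, Complex.add_im, Complex.mul_im, Complex.add_re, Complex.mul_re, hp.im_eq_zero_s10,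
    Complex.conj_I, Complex.neg_re, Complex.neg_im, Complex.I_re, Complex.I_im] at h₁ h₂
  apply Complex.ext <;> simp only [Complex.conj_re, Complex.conj_im] <;> linarith

lemma norm_apply_sq_le (hp : IsNNForm p) (x y : X) : ‖p x y‖ ^ 2 ≤ FQ p x * FQ p y := by
  -- Mathlib's inner products are conjugate-linear in the first variable, hence `⟪x, y⟫ := p y x`.
  have h := InnerProductSpace.Core.inner_mul_inner_self_le (𝕜 := ℂ) (F := X) (c :=
    { inner x y := p y x
      conj_inner_symm x y := hp.conj_apply_s10 x y
      re_inner_nonneg x := hp.fq_nonneg x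
      add_left x y z := by simp
      smul_left x y r := by simp }) y x
  calc ‖p x y‖ ^ 2 = ‖p x y‖ * ‖p y x‖ := by rw [← hp.conj_apply_s10, Complex.norm_conj, sq]
    _ ≤ FQ p y * FQ p x := h
    _ = FQ p x * FQ p y := mul_comm _ _

lemma of_add_of_sub (hadd : IsNNForm (p + e)) (hsub : IsNNForm (p - e)) : IsNNForm p := by
  have hp : p = (2⁻¹ : ℝ) • ((p + e) + (p - e)) := by module
  rw [hp]
  exact (hadd.add hsub).smul (by norm_num)

end IsNNForm

lemma norm_apply_sq_le_of_isNNForm_add_sub (hadd : IsNNForm (p + e)) (hsub : IsNNForm (p - e))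
    (x y : X) : ‖e x y‖ ^ 2 ≤ 2 * (FQ p x * FQ p y) := by
  have htri : 2 * ‖e x y‖ ≤ ‖(p + e) x y‖ + ‖(p - e) x y‖ := by
    have hdiff : (p + e) x y - (p - e) x y = 2 * e x y := by
      simp only [LinearMap.add_apply, LinearMap.sub_apply]; ring
    calc 2 * ‖e x y‖ = ‖(p + e) x y - (p - e) x y‖ := by rw [hdiff, norm_mul, Complex.norm_two]
      _ ≤ ‖(p + e) x y‖ + ‖(p - e) x y‖ := norm_sub_le _ _
  have hA := hadd.norm_apply_sq_le x y
  have hB := hsub.norm_apply_sq_le x y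
  have hx_add := hadd.fq_nonneg x
  have hx_sub := hsub.fq_nonneg x
  have hy_add := hadd.fq_nonneg y
  have hy_sub := hsub.fq_nonneg y
  simp only [fq_add, fq_sub] at hA hB hx_add hx_sub hy_add hy_sub
  nlinarith [norm_nonneg (e x y), sq_nonneg (‖(p + e) x y‖ - ‖(p - e) x y‖),
    mul_nonneg hx_add hy_sub, mul_nonneg hx_sub hy_add]

def rankOneForm (f : X →ₗ[ℂ] ℂ) : X →ₗ[ℂ] X →ₗ⋆[ℂ] ℂ :=
  LinearMap.mk₂'ₛₗ (RingHom.id ℂ) (starRingEnd ℂ) (fun x y => f x * starRingEnd ℂ (f y))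
    (fun _ _ _ => by simp [add_mul]) (fun _ _ _ => by simp [mul_assoc])
    (fun _ _ _ => by simp [mul_add])
    (fun _ _ _ => by simp only [map_smulₛₗ, map_mul, smul_eq_mul, RingHom.id_apply]; ring)

lemma rankOneForm_apply_self (f : X →ₗ[ℂ] ℂ) (x : X) :
    rankOneForm f x x = (‖f x‖ ^ 2 : ℝ) := by
  simp [rankOneForm, Complex.mul_conj, Complex.normSq_eq_norm_sq]

lemma isNNForm_rankOneForm (f : X →ₗ[ℂ] ℂ) : IsNNForm (rankOneForm f) := fun x => by
  rw [rankOneForm_apply_self]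
  exact Complex.zero_le_real.mpr (by positivity)

@[simp]
lemma fq_rankOneForm (f : X →ₗ[ℂ] ℂ) (x : X) : FQ (rankOneForm f) x = ‖f x‖ ^ 2 := by
  rw [FQ, rankOneForm_apply_self, Complex.ofReal_re]

lemma eq_zero_of_singForm (hpq : SingForm p q) (hp_add : IsNNForm (p + e))
    (hp_sub : IsNNForm (p - e)) (hq_add : IsNNForm (q + e)) (hq_sub : IsNNForm (q - e)) :
    e = 0 := by
  ext x y
  have hp := (hp_add.of_add_of_sub hp_sub).fq_nonneg y
  have hq := (hq_add.of_add_of_sub hq_sub).fq_nonneg y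
  set κ : ℝ := (2 * (FQ p y + FQ q y + 1))⁻¹
  have hκ : 0 < κ := by positivity
  have hκ' : 2 * κ * (FQ p y + FQ q y + 1) = 1 := by simp only [κ]; field_simp
  set s := κ • rankOneForm (e.flip y)
  have hs_below : ∀ r, IsNNForm (r + e) → IsNNForm (r - e) → 2 * κ * FQ r y ≤ 1 → FLe s r := by
    intro r hadd hsub hr z
    calc FQ s z = κ * ‖e z y‖ ^ 2 := by simp [s]
      _ ≤ κ * (2 * (FQ r z * FQ r y)) :=
        mul_le_mul_of_nonneg_left (norm_apply_sq_le_of_isNNForm_add_sub hadd hsub z y) hκ.le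
      _ = (2 * κ * FQ r y) * FQ r z := by ring
      _ ≤ FQ r z := mul_le_of_le_one_left ((hadd.of_add_of_sub hsub).fq_nonneg z) hr
  have hs : s = 0 := hpq s ((isNNForm_rankOneForm _).smul hκ.le)
    (hs_below p hp_add hp_sub (by nlinarith)) (hs_below q hq_add hq_sub (by nlinarith))
  have hsx : FQ s x = 0 := by simp [hs, FQ]
  simpa [s, hκ.ne'] using hsx

lemma singForm_of_mem_extremePoints {t w : X →ₗ[ℂ] X →ₗ⋆[ℂ] ℂ}
    (hext : w ∈ Set.extremePoints ℝ {s | IsNNForm s ∧ FLe s t}) : SingForm w (t - w) := by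
  obtain ⟨⟨hw, hwt⟩, hleft⟩ := hext
  intro s hs hsw hstw
  have hadd : w + s ∈ {s | IsNNForm s ∧ FLe s t} :=
    ⟨hw.add hs, fun x => by have := hstw x; simp only [fq_add, fq_sub] at this ⊢; linarith⟩
  have hsub : w - s ∈ {s | IsNNForm s ∧ FLe s t} :=
    ⟨hw.sub_of_fLe hs hsw, fun x => by
      have := hwt x; have := hs.fq_nonneg x; simp only [fq_sub]; linarith⟩
  have hmid : w ∈ openSegment ℝ (w + s) (w - s) :=
    ⟨1 / 2, 1 / 2, by norm_num, by norm_num, by norm_num, by module⟩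
  simpa using hleft hadd hsub hmid

lemma mem_extremePoints_of_singForm {t w : X →ₗ[ℂ] X →ₗ⋆[ℂ] ℂ} (ht : IsNNForm t)
    (hw : IsNNForm w) (hwt : FLe w t) (hsing : SingForm w (t - w)) :
    w ∈ Set.extremePoints ℝ {s | IsNNForm s ∧ FLe s t} := by
  refine ⟨⟨hw, hwt⟩, ?_⟩
  rintro w₁ ⟨hw₁, hw₁t⟩ w₂ ⟨hw₂, hw₂t⟩ ⟨a, b, ha, hb, hab, hsum⟩
  obtain rfl : b = 1 - a := by linarith
  have htw := ht.sub_of_fLe hw hwt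
  have he : a • (w₁ - w) = 0 := by
    refine eq_zero_of_singForm hsing ?_ ?_ ?_ ?_
    · rw [show w + a • (w₁ - w) = (1 - a) • w + a • w₁ by module]
      exact (hw.smul hb.le).add (hw₁.smul ha.le)
    · rw [show w - a • (w₁ - w) = a • w + (1 - a) • w₂ by rw [← hsum]; module]
      exact (hw.smul ha.le).add (hw₂.smul hb.le)
    · rw [show t - w + a • (w₁ - w) = a • (t - w) + (1 - a) • (t - w₂) by rw [← hsum]; module]
      exact (htw.smul ha.le).add ((ht.sub_of_fLe hw₂ hw₂t).smul hb.le)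
    · rw [show t - w - a • (w₁ - w) = (1 - a) • (t - w) + a • (t - w₁) by module]
      exact (htw.smul hb.le).add ((ht.sub_of_fLe hw₁ hw₁t).smul ha.le)
  exact sub_eq_zero.mp ((smul_eq_zero.mp he).resolve_left ha.ne')

end

theorem extreme_point_iff_singular_forms
    {X : Type*} [AddCommGroup X] [Module ℂ X]
    (t w : X →ₗ[ℂ] X →ₗ⋆[ℂ] ℂ) (ht : IsNNForm t) (hw : IsNNForm w) (hwt : FLe w t) :
    w ∈ Set.extremePoints ℝ {s : X →ₗ[ℂ] X →ₗ⋆[ℂ] ℂ | IsNNForm s ∧ FLe s t} ↔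
      SingForm w (t - w) :=
  ⟨singForm_of_mem_extremePoints, mem_extremePoints_of_singForm ht hw hwt⟩
end

section
/- Let t be a nonnegative form on a complex vector space X and let w be a nonnegative form with w ≤ t. Then w[x] = sup_{n∈ℕ} inf_{y∈X} (t[x−y] + n·w[y]) holds for all x ∈ X (i.e. D_w t = w, w is a t-quasi-unit) if and only if w is an extreme point of the convex set [0,t] (inside the complex vector space of sesquilinear forms on X, regarded as a real vector space). -/
open scoped ComplexOrder

/-!
Write `q_c[x] = ⨅ y, t[x - y] + c w[y]` for the quadratic form of the parallel sum `t : (c w)`.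
It satisfies `c/(c+1) w ≤ q_c ≤ c/(c+1) t` and `q_c ≤ c w`, and since `√q_c` is a quotient
seminorm obeying the parallelogram law, the Jordan–von Neumann theorem makes `q_c` the quadratic
form of a nonnegative form `p_c`.

If `w` is extreme in `[0, t]`, the form `r = (c+1)/c p_c` lies between `w` and `t` and below
`(c+1) w`, so `w ± δ (w - r) ∈ [0, t]` for small `δ > 0`; hence `r = w` and `q_c ≤ w`, while
`w ≤ ⨆ n, q_n` is the lower bound above.
Conversely, let `w = D_w t` and `w = a u + b v` with `u, v ∈ [0, t]`. From `a u ≤ w` we get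
`n/(n+1) u ≤ q_n(u) ≤ q_⌈n/a⌉(w) ≤ w`, so `u ≤ w`; likewise `v ≤ w`, and then `u = v = w`.
-/

section Forms

variable {X : Type*} [AddCommGroup X] [Module ℂ X]

section QuadraticForm

variable {s r : X →ₗ[ℂ] X →ₗ⋆[ℂ] ℂ}

lemma FQ_nonneg (hs : IsNNForm s) (x : X) : 0 ≤ FQ s x :=
  (Complex.le_def.1 (hs x)).1

lemma ofReal_FQ (hs : IsNNForm s) (x : X) : (FQ s x : ℂ) = s x x :=
  Complex.ext rfl (Complex.le_def.1 (hs x)).2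

lemma FQ_add_left (s r : X →ₗ[ℂ] X →ₗ⋆[ℂ] ℂ) (x : X) : FQ (s + r) x = FQ s x + FQ r x :=
  Complex.add_re _ _

lemma FQ_smul_left (a : ℝ) (s : X →ₗ[ℂ] X →ₗ⋆[ℂ] ℂ) (x : X) : FQ (a • s) x = a * FQ s x :=
  Complex.smul_re _ _

lemma FQ_smul_right (s : X →ₗ[ℂ] X →ₗ⋆[ℂ] ℂ) (c : ℂ) (x : X) :
    FQ s (c • x) = ‖c‖ ^ 2 * FQ s x := by
  simp only [FQ, map_smul, LinearMap.smul_apply, LinearMap.map_smulₛₗ, smul_eq_mul]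
  rw [← mul_assoc, mul_comm (starRingEnd ℂ c), Complex.mul_conj, Complex.re_ofReal_mul,
    Complex.normSq_eq_norm_sq]

lemma FQ_ofReal_smul_right (s : X →ₗ[ℂ] X →ₗ⋆[ℂ] ℂ) (a : ℝ) (x : X) :
    FQ s ((a : ℂ) • x) = a ^ 2 * FQ s x := by
  rw [FQ_smul_right, Complex.norm_real, Real.norm_eq_abs, sq_abs]

lemma FQ_add_add_FQ_sub (s : X →ₗ[ℂ] X →ₗ⋆[ℂ] ℂ) (x y : X) :
    FQ s (x + y) + FQ s (x - y) = 2 * FQ s x + 2 * FQ s y := by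
  simp only [FQ, map_add, map_sub, LinearMap.add_apply, LinearMap.sub_apply, Complex.add_re,
    Complex.sub_re]
  ring

lemma FQ_add_le (hs : IsNNForm s) (x y : X) {ε : ℝ} (hε : 0 < ε) :
    FQ s (x + y) ≤ (1 + ε) * FQ s x + (1 + ε⁻¹) * FQ s y := by
  have key : FQ s (x + y) + ε⁻¹ * FQ s ((ε : ℂ) • x - y)
      = (1 + ε) * FQ s x + (1 + ε⁻¹) * FQ s y := by
    simp only [FQ, map_add, map_sub, map_smul, LinearMap.add_apply, LinearMap.sub_apply,
      LinearMap.smul_apply, LinearMap.map_smulₛₗ, Complex.conj_ofReal, smul_eq_mul,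
      Complex.add_re, Complex.sub_re, Complex.re_ofReal_mul]
    field_simp
    ring
  have := mul_nonneg (inv_nonneg.2 hε.le) (FQ_nonneg hs ((ε : ℂ) • x - y))
  linarith

lemma IsNNForm.smul_s11 {a : ℝ} (hs : IsNNForm s) (ha : 0 ≤ a) : IsNNForm (a • s) :=
  fun x => smul_nonneg ha (hs x)

lemma IsNNForm.smul_add_smul (hs : IsNNForm s) (hr : IsNNForm r) {a b : ℝ}
    (h : ∀ x, 0 ≤ a * FQ s x + b * FQ r x) : IsNNForm (a • s + b • r) := fun x => by
  rw [LinearMap.add_apply, LinearMap.smul_apply, LinearMap.smul_apply, LinearMap.add_apply,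
    LinearMap.smul_apply, LinearMap.smul_apply, ← ofReal_FQ hs, ← ofReal_FQ hr,
    Complex.real_smul, Complex.real_smul]
  exact_mod_cast h x

lemma eq_zero_of_forall_apply_self_eq_zero (h : ∀ x, s x x = 0) : s = 0 := by
  ext x y
  have h₁ := h (x + y)
  have h₂ := h (x + Complex.I • y)
  simp only [map_add, map_smul, LinearMap.add_apply, LinearMap.smul_apply,
    LinearMap.map_smulₛₗ, smul_eq_mul, h, Complex.conj_I] at h₁ h₂
  rw [LinearMap.zero_apply, LinearMap.zero_apply]
  linear_combination (h₁ + Complex.I * h₂ + (s x y - s y x) * Complex.I_sq) / 2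

lemma eq_of_forall_FQ_eq (hs : IsNNForm s) (hr : IsNNForm r) (h : ∀ x, FQ s x = FQ r x) :
    s = r :=
  sub_eq_zero.1 <| eq_zero_of_forall_apply_self_eq_zero fun x => by
    rw [LinearMap.sub_apply, LinearMap.sub_apply, ← ofReal_FQ hs, ← ofReal_FQ hr, h, sub_self]

end QuadraticForm

lemma sqrt_le_sqrt_add_sqrt_of_forall_le {a b c : ℝ} (hb : 0 ≤ b) (hc : 0 ≤ c)
    (h : ∀ ε > 0, a ≤ (1 + ε) * b + (1 + ε⁻¹) * c) : √a ≤ √b + √c := by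
  set β := √b
  set γ := √c
  have hβ : 0 ≤ β := Real.sqrt_nonneg b
  have hγ : 0 ≤ γ := Real.sqrt_nonneg c
  have hbβ : β ^ 2 = b := Real.sq_sqrt hb
  have hcγ : γ ^ 2 = c := Real.sq_sqrt hc
  refine Real.sqrt_le_iff.2 ⟨by positivity, le_of_forall_pos_le_add fun δ hδ => ?_⟩
  set η := δ / (β + γ + 1)
  have hη : 0 < η := by positivity
  have hηδ : η * (β + γ) ≤ δ := by
    rw [div_mul_eq_mul_div, div_le_iff₀ (by positivity)]
    nlinarith
  -- `ε = γ / β` minimises the bound; `η` keeps numerator and denominator positive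
  have h₁ : (γ + η) / (β + η) * b ≤ (γ + η) * β := by
    rw [div_mul_eq_mul_div, div_le_iff₀ (by positivity), ← hbβ]
    nlinarith [mul_nonneg (add_nonneg hγ hη.le) (mul_nonneg hβ hη.le)]
  have h₂ : ((γ + η) / (β + η))⁻¹ * c ≤ (β + η) * γ := by
    rw [inv_div, div_mul_eq_mul_div, div_le_iff₀ (by positivity), ← hcγ]
    nlinarith [mul_nonneg (add_nonneg hβ hη.le) (mul_nonneg hγ hη.le)]
  have := h ((γ + η) / (β + η)) (by positivity)
  linear_combination this + h₁ + h₂ + hηδ - hbβ - hcγ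

lemma le_of_forall_natCast_mul_le_add_one_mul {a b : ℝ} (h : ∀ n : ℕ, n * a ≤ (n + 1) * b) :
    a ≤ b := by
  refine le_of_tendsto' (by simpa using (tendsto_natCast_div_add_atTop (1 : ℝ)).mul_const a)
    fun n => ?_
  rw [div_mul_eq_mul_div, div_le_iff₀ (by positivity)]
  linarith [h n]

/-- Jordan–von Neumann: `√q` is only a seminorm, so pass to its separation quotient. -/
lemma exists_sesqForm_apply_self_eq {q : X → ℝ} (h0 : ∀ x, 0 ≤ q x)
    (hsmul : ∀ (c : ℂ) x, q (c • x) = ‖c‖ ^ 2 * q x)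
    (hpar : ∀ x y, q (x + y) + q (x - y) = 2 * q x + 2 * q y)
    (hadd : ∀ x y, √(q (x + y)) ≤ √(q x) + √(q y)) :
    ∃ p : X →ₗ[ℂ] X →ₗ⋆[ℂ] ℂ, ∀ x, p x x = q x := by
  let _ : SeminormedAddCommGroup X := AddGroupSeminorm.toSeminormedAddCommGroup
    { toFun := fun x => √(q x)
      map_zero' := by simpa using congrArg Real.sqrt (hsmul 0 0)
      add_le' := hadd
      neg' := fun x => by simpa using congrArg Real.sqrt (hsmul (-1) x) }
  have norm_mul_self : ∀ x : X, ‖SeparationQuotient.mk x‖ * ‖SeparationQuotient.mk x‖ = q x :=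
    fun x => Real.mul_self_sqrt (h0 x)
  let _ : NormedSpace ℂ X := ⟨fun c x => by
    show √(q (c • x)) ≤ ‖c‖ * √(q x)
    rw [hsmul, Real.sqrt_mul (by positivity), Real.sqrt_sq (norm_nonneg c)]⟩
  let _ : InnerProductSpace ℂ (SeparationQuotient X) := InnerProductSpace.ofNorm ℂ <|
    SeparationQuotient.surjective_mk.forall₂.2 fun x y => by
      rw [← SeparationQuotient.mk_add, ← SeparationQuotient.mk_sub, norm_mul_self,
        norm_mul_self, norm_mul_self, norm_mul_self, hpar, mul_add]
  let π := (SeparationQuotient.mkCLM ℂ X).toLinearMap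
  refine ⟨((innerₛₗ ℂ).flip ∘ₗ π).compl₂ π, fun x => ?_⟩
  simp only [LinearMap.compl₂_apply, LinearMap.comp_apply, LinearMap.flip_apply,
    innerₛₗ_apply_apply, π, ContinuousLinearMap.coe_coe, SeparationQuotient.mkCLM_apply,
    inner_self_eq_norm_sq_to_K]
  rw [← norm_mul_self x, ← sq, Complex.ofReal_pow]
  rfl

/-- The quadratic form of the parallel sum `t : (c • w)`. -/
noncomputable def parSumQ (t w : X →ₗ[ℂ] X →ₗ⋆[ℂ] ℂ) (c : ℝ) (x : X) : ℝ :=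
  ⨅ y, (FQ t (x - y) + c * FQ w y)

section ParallelSum

variable {t w : X →ₗ[ℂ] X →ₗ⋆[ℂ] ℂ} {c : ℝ}

lemma parSumQ_nonneg (ht : IsNNForm t) (hw : IsNNForm w) (hc : 0 ≤ c) (x : X) :
    0 ≤ parSumQ t w c x :=
  Real.iInf_nonneg fun y => add_nonneg (FQ_nonneg ht _) (mul_nonneg hc (FQ_nonneg hw y))

lemma bddBelow_parSumQ (ht : IsNNForm t) (hw : IsNNForm w) (hc : 0 ≤ c) (x : X) :
    BddBelow (Set.range fun y => FQ t (x - y) + c * FQ w y) :=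
  ⟨0, Set.forall_mem_range.2 fun y => add_nonneg (FQ_nonneg ht _) (mul_nonneg hc (FQ_nonneg hw y))⟩

lemma parSumQ_le_left (ht : IsNNForm t) (hw : IsNNForm w) (hc : 0 ≤ c) (x : X) :
    parSumQ t w c x ≤ FQ t x :=
  (ciInf_le (bddBelow_parSumQ ht hw hc x) 0).trans_eq (by simp [FQ])

lemma parSumQ_le_right (ht : IsNNForm t) (hw : IsNNForm w) (hc : 0 ≤ c) (x : X) :
    parSumQ t w c x ≤ c * FQ w x :=
  (ciInf_le (bddBelow_parSumQ ht hw hc x) x).trans_eq (by simp [FQ])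

lemma mul_FQ_le_parSumQ (hw : IsNNForm w) (hwt : FLe w t) (hc : 0 ≤ c) (x : X) :
    c * FQ w x ≤ (c + 1) * parSumQ t w c x := by
  rw [parSumQ, Real.mul_iInf_of_nonneg (by positivity)]
  refine le_ciInf fun y => ?_
  have key : c * FQ w (x - y + y) + FQ w (x - y - (c : ℂ) • y)
      = (c + 1) * (FQ w (x - y) + c * FQ w y) := by
    simp only [FQ, map_add, map_sub, map_smul, LinearMap.add_apply, LinearMap.sub_apply,
      LinearMap.smul_apply, LinearMap.map_smulₛₗ, Complex.conj_ofReal, smul_eq_mul,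
      Complex.add_re, Complex.sub_re, Complex.re_ofReal_mul]
    ring
  rw [sub_add_cancel] at key
  nlinarith [FQ_nonneg hw (x - y - (c : ℂ) • y), hwt (x - y)]

lemma mul_parSumQ_le_mul_FQ (ht : IsNNForm t) (hw : IsNNForm w) (hwt : FLe w t) (hc : 0 ≤ c)
    (x : X) : (c + 1) * parSumQ t w c x ≤ c * FQ t x := by
  set a : ℝ := (c + 1)⁻¹
  have hx : x - (a : ℂ) • x = ((1 - a : ℝ) : ℂ) • x := by
    rw [Complex.ofReal_sub, Complex.ofReal_one, sub_smul, one_smul]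
  have hy := ciInf_le (bddBelow_parSumQ ht hw hc x) ((a : ℂ) • x)
  rw [hx, FQ_ofReal_smul_right, FQ_ofReal_smul_right] at hy
  have := mul_le_mul_of_nonneg_left (hwt x) (by positivity : 0 ≤ c * a ^ 2)
  calc (c + 1) * parSumQ t w c x ≤ (c + 1) * (((1 - a) ^ 2 + c * a ^ 2) * FQ t x) := by
        gcongr
        exact hy.trans (by linarith)
    _ = c * FQ t x := by
        simp only [a]
        field_simp
        ring

lemma parSumQ_mono {s : X →ₗ[ℂ] X →ₗ⋆[ℂ] ℂ} (ht : IsNNForm t) (hs : IsNNForm s) (hc : 0 ≤ c)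
    {c' : ℝ} (h : ∀ y, c * FQ s y ≤ c' * FQ w y) (x : X) :
    parSumQ t s c x ≤ parSumQ t w c' x :=
  ciInf_mono (bddBelow_parSumQ ht hs hc x) fun y => add_le_add le_rfl (h y)

lemma parSumQ_smul (ht : IsNNForm t) (hw : IsNNForm w) (hc : 0 ≤ c) (a : ℂ) (x : X) :
    parSumQ t w c (a • x) = ‖a‖ ^ 2 * parSumQ t w c x := by
  rcases eq_or_ne a 0 with rfl | ha
  · have := parSumQ_le_right ht hw hc (0 : X)
    simp only [FQ, map_zero, Complex.zero_re, mul_zero] at this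
    simpa using this.antisymm (parSumQ_nonneg ht hw hc 0)
  · rw [parSumQ, parSumQ, Real.mul_iInf_of_nonneg (by positivity),
      ← (Equiv.smulRight ha).iInf_comp]
    simp only [Equiv.smulRight_apply, ← smul_sub, FQ_smul_right]
    exact iInf_congr fun y => by ring

lemma parSumQ_add_le (ht : IsNNForm t) (hw : IsNNForm w) (hc : 0 ≤ c) (x x' : X) {ε : ℝ}
    (hε : 0 < ε) :
    parSumQ t w c (x + x') ≤ (1 + ε) * parSumQ t w c x + (1 + ε⁻¹) * parSumQ t w c x' := by
  simp only [parSumQ]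
  rw [Real.mul_iInf_of_nonneg (by positivity), Real.mul_iInf_of_nonneg (by positivity)]
  refine le_ciInf_add_ciInf fun y y' => (ciInf_le (bddBelow_parSumQ ht hw hc _) (y + y')).trans ?_
  rw [show x + x' - (y + y') = (x - y) + (x' - y') by abel]
  nlinarith [FQ_add_le ht (x - y) (x' - y') hε, FQ_add_le hw y y' hε]

lemma parSumQ_add_add_parSumQ_sub (ht : IsNNForm t) (hw : IsNNForm w) (hc : 0 ≤ c) (x x' : X) :
    parSumQ t w c (x + x') + parSumQ t w c (x - x')
      = 2 * parSumQ t w c x + 2 * parSumQ t w c x' := by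
  have hle : ∀ u v : X, parSumQ t w c (u + v) + parSumQ t w c (u - v)
      ≤ 2 * parSumQ t w c u + 2 * parSumQ t w c v := fun u v => by
    have hsum := fun y y' => ciInf_le (bddBelow_parSumQ ht hw hc (u + v)) (y + y')
    have hdiff := fun y y' => ciInf_le (bddBelow_parSumQ ht hw hc (u - v)) (y - y')
    simp only [parSumQ] at hsum hdiff ⊢
    rw [Real.mul_iInf_of_nonneg (by positivity), Real.mul_iInf_of_nonneg (by positivity)]
    refine le_ciInf_add_ciInf fun y y' => ?_
    have hp := hsum y y'
    have hm := hdiff y y'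
    rw [show u + v - (y + y') = (u - y) + (v - y') by abel] at hp
    rw [show u - v - (y - y') = (u - y) - (v - y') by abel] at hm
    have := FQ_add_add_FQ_sub t (u - y) (v - y')
    have := FQ_add_add_FQ_sub w y y'
    nlinarith
  -- the reverse inequality is the same one applied to `x + x'` and `x - x'`
  have hrev := hle (x + x') (x - x')
  rw [add_add_sub_cancel, add_sub_sub_cancel, ← two_smul ℂ x, ← two_smul ℂ x',
    parSumQ_smul ht hw hc, parSumQ_smul ht hw hc] at hrev
  norm_num at hrev
  linarith [hle x x']

lemma exists_FQ_eq_parSumQ (ht : IsNNForm t) (hw : IsNNForm w) (hc : 0 ≤ c) :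
    ∃ p : X →ₗ[ℂ] X →ₗ⋆[ℂ] ℂ, IsNNForm p ∧ ∀ x, FQ p x = parSumQ t w c x := by
  obtain ⟨p, hp⟩ := exists_sesqForm_apply_self_eq (parSumQ_nonneg ht hw hc)
    (parSumQ_smul ht hw hc) (parSumQ_add_add_parSumQ_sub ht hw hc) fun x x' =>
      sqrt_le_sqrt_add_sqrt_of_forall_le (parSumQ_nonneg ht hw hc x)
        (parSumQ_nonneg ht hw hc x') fun ε hε => parSumQ_add_le ht hw hc x x' hε
  refine ⟨p, fun x => ?_, fun x => ?_⟩
  · rw [hp]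
    exact_mod_cast parSumQ_nonneg ht hw hc x
  · rw [FQ, hp, Complex.ofReal_re]

end ParallelSum

/-- `D_w t = w`, where `D_w t [x] = ⨆ n, parSumQ t w n x`. -/
def IsQuasiUnit (t w : X →ₗ[ℂ] X →ₗ⋆[ℂ] ℂ) : Prop :=
  ∀ x, FQ w x = ⨆ n : ℕ, parSumQ t w n x

section QuasiUnit

variable {t w : X →ₗ[ℂ] X →ₗ⋆[ℂ] ℂ}

lemma bddAbove_parSumQ (ht : IsNNForm t) (hw : IsNNForm w) (x : X) :
    BddAbove (Set.range fun n : ℕ => parSumQ t w n x) :=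
  ⟨FQ t x, Set.forall_mem_range.2 fun n => parSumQ_le_left ht hw n.cast_nonneg x⟩

lemma FQ_le_iSup_parSumQ (ht : IsNNForm t) (hw : IsNNForm w) (hwt : FLe w t) (x : X) :
    FQ w x ≤ ⨆ n : ℕ, parSumQ t w n x :=
  le_of_forall_natCast_mul_le_add_one_mul fun n =>
    (mul_FQ_le_parSumQ hw hwt n.cast_nonneg x).trans <|
      mul_le_mul_of_nonneg_left (le_ciSup (bddAbove_parSumQ ht hw x) n) (by positivity)

lemma IsQuasiUnit.FQ_le_of_mul_le (hq : IsQuasiUnit t w) (ht : IsNNForm t) (hw : IsNNForm w)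
    {s : X →ₗ[ℂ] X →ₗ⋆[ℂ] ℂ} (hs : IsNNForm s) (hst : FLe s t) {a : ℝ} (ha : 0 < a)
    (hsw : ∀ x, a * FQ s x ≤ FQ w x) (x : X) : FQ s x ≤ FQ w x := by
  refine le_of_forall_natCast_mul_le_add_one_mul fun n => ?_
  have hmono : parSumQ t s n x ≤ parSumQ t w ⌈n / a⌉₊ x :=
    parSumQ_mono ht hs n.cast_nonneg (fun y => calc
      (n : ℝ) * FQ s y = n / a * (a * FQ s y) := by field_simp
      _ ≤ ⌈n / a⌉₊ * FQ w y := mul_le_mul (Nat.le_ceil _) (hsw y)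
          (mul_nonneg ha.le (FQ_nonneg hs y)) (Nat.cast_nonneg _)) x
  calc (n : ℝ) * FQ s x ≤ (n + 1) * parSumQ t s n x := mul_FQ_le_parSumQ hs hst n.cast_nonneg x
    _ ≤ (n + 1) * FQ w x := by
      gcongr
      exact hmono.trans (hq x ▸ le_ciSup (bddAbove_parSumQ ht hw x) _)

lemma IsQuasiUnit.mem_extremePoints (hq : IsQuasiUnit t w) (ht : IsNNForm t) (hw : IsNNForm w)
    (hwt : FLe w t) : w ∈ Set.extremePoints ℝ {s | IsNNForm s ∧ FLe s t} := by
  refine _root_.mem_extremePoints.2 ⟨⟨hw, hwt⟩, fun u hu v hv ⟨a, b, ha, hb, hab, huv⟩ => ?_⟩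
  have hcomb : ∀ x, a * FQ u x + b * FQ v x = FQ w x := fun x => by
    rw [← huv, FQ_add_left, FQ_smul_left, FQ_smul_left]
  have hu_le := hq.FQ_le_of_mul_le ht hw hu.1 hu.2 ha fun x => by
    nlinarith [hcomb x, FQ_nonneg hv.1 x]
  have hv_le := hq.FQ_le_of_mul_le ht hw hv.1 hv.2 hb fun x => by
    nlinarith [hcomb x, FQ_nonneg hu.1 x]
  have heq : ∀ x, FQ w x - FQ u x = 0 ∧ FQ w x - FQ v x = 0 := fun x => by
    have hsum : a * (FQ w x - FQ u x) + b * (FQ w x - FQ v x) = 0 := by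
      linear_combination FQ w x * hab - hcomb x
    have hu0 := mul_nonneg ha.le (sub_nonneg.2 (hu_le x))
    have hv0 := mul_nonneg hb.le (sub_nonneg.2 (hv_le x))
    exact ⟨(mul_eq_zero.1 (by linarith)).resolve_left ha.ne',
      (mul_eq_zero.1 (by linarith)).resolve_left hb.ne'⟩
  exact ⟨eq_of_forall_FQ_eq hu.1 hw fun x => (sub_eq_zero.1 (heq x).1).symm,
    eq_of_forall_FQ_eq hv.1 hw fun x => (sub_eq_zero.1 (heq x).2).symm⟩

end QuasiUnit

section ExtremePoint

variable {t w : X →ₗ[ℂ] X →ₗ⋆[ℂ] ℂ}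

lemma eq_of_mem_extremePoints (hext : w ∈ Set.extremePoints ℝ {s | IsNNForm s ∧ FLe s t})
    {r : X →ₗ[ℂ] X →ₗ⋆[ℂ] ℂ} (hr : IsNNForm r) (hwr : FLe w r) (hrt : FLe r t) {C : ℝ}
    (hrC : ∀ x, FQ r x ≤ C * FQ w x) : r = w := by
  obtain ⟨⟨hw, hwt⟩, hseg⟩ := mem_extremePoints.1 hext
  -- `w` is the midpoint of `w ± δ • (w - r)`, and both lie in `[0, t]` for small `δ > 0`
  set δ : ℝ := (1 + |C|)⁻¹
  have hδ : 0 < δ := by positivity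
  have hδ1 : δ ≤ 1 := inv_le_one_of_one_le₀ (by linarith [abs_nonneg C])
  have hδC : δ * C ≤ 1 + δ := by
    have : δ * (1 + |C|) = 1 := inv_mul_cancel₀ (by positivity)
    nlinarith [mul_le_mul_of_nonneg_left (le_abs_self C) hδ.le]
  have hplus : (1 + δ) • w + (-δ) • r ∈ {s | IsNNForm s ∧ FLe s t} := by
    refine ⟨hw.smul_add_smul hr fun x => ?_, fun x => ?_⟩
    · nlinarith [mul_le_mul_of_nonneg_left (hrC x) hδ.le,
        mul_nonneg (sub_nonneg.2 hδC) (FQ_nonneg hw x)]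
    · rw [FQ_add_left, FQ_smul_left, FQ_smul_left]
      nlinarith [hwr x, hwt x]
  have hminus : (1 - δ) • w + δ • r ∈ {s | IsNNForm s ∧ FLe s t} := by
    refine ⟨hw.smul_add_smul hr fun x => ?_, fun x => ?_⟩
    · nlinarith [FQ_nonneg hw x, FQ_nonneg hr x]
    · rw [FQ_add_left, FQ_smul_left, FQ_smul_left]
      nlinarith [hrt x, hwt x]
  have hplus_eq := hseg _ hplus _ hminus ⟨1 / 2, 1 / 2, by norm_num, by norm_num, by norm_num,
    by module⟩
  refine eq_of_forall_FQ_eq hr hw fun x => ?_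
  have := congrArg (FQ · x) hplus_eq.1
  simp only [FQ_add_left, FQ_smul_left] at this
  have : δ * (FQ r x - FQ w x) = 0 := by linarith
  exact sub_eq_zero.1 ((mul_eq_zero.1 this).resolve_left hδ.ne')

lemma parSumQ_le_of_mem_extremePoints
    (hext : w ∈ Set.extremePoints ℝ {s | IsNNForm s ∧ FLe s t}) (ht : IsNNForm t)
    {c : ℝ} (hc : 0 ≤ c) (x : X) : parSumQ t w c x ≤ FQ w x := by
  obtain ⟨⟨hw, hwt⟩, -⟩ := mem_extremePoints.1 hext
  rcases hc.eq_or_lt with rfl | hc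
  · linarith [parSumQ_le_right ht hw le_rfl x, FQ_nonneg hw x]
  obtain ⟨p, hp, hFQp⟩ := exists_FQ_eq_parSumQ ht hw hc.le
  have hw_le : FLe w (((c + 1) / c) • p) := fun y => by
    rw [FQ_smul_left, hFQp, div_mul_eq_mul_div, le_div_iff₀ hc]
    linarith [mul_FQ_le_parSumQ hw hwt hc.le y]
  have hle_t : FLe (((c + 1) / c) • p) t := fun y => by
    rw [FQ_smul_left, hFQp, div_mul_eq_mul_div, div_le_iff₀ hc]
    linarith [mul_parSumQ_le_mul_FQ ht hw hwt hc.le y]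
  have hle_w : ∀ y, FQ (((c + 1) / c) • p) y ≤ (c + 1) * FQ w y := fun y => by
    rw [FQ_smul_left, hFQp, div_mul_eq_mul_div, div_le_iff₀ hc]
    nlinarith [parSumQ_le_right ht hw hc.le y]
  have hFQ := congrArg (FQ · x) <| eq_of_mem_extremePoints hext (hp.smul_s11 (by positivity))
    hw_le hle_t hle_w
  simp only [FQ_smul_left, hFQp] at hFQ
  rw [← hFQ]
  exact le_mul_of_one_le_left (parSumQ_nonneg ht hw hc.le x) ((one_le_div hc).2 (by linarith))

lemma isQuasiUnit_of_mem_extremePoints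
    (hext : w ∈ Set.extremePoints ℝ {s | IsNNForm s ∧ FLe s t}) (ht : IsNNForm t) :
    IsQuasiUnit t w := fun x =>
  (FQ_le_iSup_parSumQ ht (extremePoints_subset hext).1 (extremePoints_subset hext).2 x).antisymm <|
    ciSup_le fun n => parSumQ_le_of_mem_extremePoints hext ht n.cast_nonneg x

end ExtremePoint

end Forms

theorem quasi_unit_iff_extreme_point_forms
    {X : Type*} [AddCommGroup X] [Module ℂ X]
    (t w : X →ₗ[ℂ] X →ₗ⋆[ℂ] ℂ) (ht : IsNNForm t) (hw : IsNNForm w) (hwt : FLe w t) :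
    (∀ x : X, FQ w x = ⨆ n : ℕ, ⨅ y : X, (FQ t (x - y) + (n : ℝ) * FQ w y)) ↔
      w ∈ Set.extremePoints ℝ {s : X →ₗ[ℂ] X →ₗ⋆[ℂ] ℂ | IsNNForm s ∧ FLe s t} :=
  ⟨fun hq => IsQuasiUnit.mem_extremePoints hq ht hw hwt,
    fun hext => isQuasiUnit_of_mem_extremePoints hext ht⟩
end
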